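/- arXiv:math/0405497 — 16 statements merged into one kernel-verified Lean document; each statement's English description precedes it below -/
import Mathlib

section
/- Let (H, ⟨·,·⟩) be a complex inner product space, let e ∈ H with ‖e‖ = 1, and let r₁, r₂ ≥ 0. If the vectors x₁, …, xₙ ∈ H satisfy 0 ≤ r₁‖xₖ‖ ≤ Re⟨xₖ, e⟩ and 0 ≤ r₂‖xₖ‖ ≤ Im⟨xₖ, e⟩ for each k ∈ {1, …, n}, then √(r₁² + r₂²) · Σₖ₌₁ⁿ ‖xₖ‖ ≤ ‖Σₖ₌₁ⁿ xₖ‖. -/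
open scoped InnerProductSpace

theorem stmt_0 {H : Type*} [NormedAddCommGroup H] [InnerProductSpace ℂ H]
    (e : H) (he : ‖e‖ = 1) (r₁ r₂ : ℝ) (hr₁ : 0 ≤ r₁) (hr₂ : 0 ≤ r₂)
    (n : ℕ) (x : Fin n → H)
    (h1 : ∀ k, r₁ * ‖x k‖ ≤ (⟪x k, e⟫_ℂ).re)
    (h2 : ∀ k, r₂ * ‖x k‖ ≤ (⟪x k, e⟫_ℂ).im) :
    Real.sqrt (r₁ ^ 2 + r₂ ^ 2) * ∑ k, ‖x k‖ ≤ ‖∑ k, x k‖ := by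
  set S := ∑ k, x k with hS
  set T := ∑ k, ‖x k‖ with hT
  have hT0 : 0 ≤ T := Finset.sum_nonneg fun k _ => norm_nonneg _
  have hinner : ⟪S, e⟫_ℂ = ∑ k, ⟪x k, e⟫_ℂ := by
    simp [hS, sum_inner]
  have hre : r₁ * T ≤ (⟪S, e⟫_ℂ).re := by
    rw [hinner, Complex.re_sum, hT, Finset.mul_sum]
    exact Finset.sum_le_sum fun k _ => h1 k
  have him : r₂ * T ≤ (⟪S, e⟫_ℂ).im := by
    rw [hinner, Complex.im_sum, hT, Finset.mul_sum]
    exact Finset.sum_le_sum fun k _ => h2 k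
  have habs : ‖⟪S, e⟫_ℂ‖ ≤ ‖S‖ := by
    have := norm_inner_le_norm (𝕜 := ℂ) S e
    simpa [he] using this
  have h1' : 0 ≤ r₁ * T := mul_nonneg hr₁ hT0
  have h2' : 0 ≤ r₂ * T := mul_nonneg hr₂ hT0
  calc Real.sqrt (r₁ ^ 2 + r₂ ^ 2) * T
      = Real.sqrt ((r₁ * T) ^ 2 + (r₂ * T) ^ 2) := by
        rw [show (r₁ * T) ^ 2 + (r₂ * T) ^ 2 = (r₁ ^ 2 + r₂ ^ 2) * T ^ 2 by ring,
          Real.sqrt_mul (by positivity), Real.sqrt_sq hT0]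
    _ ≤ Real.sqrt ((⟪S, e⟫_ℂ).re ^ 2 + (⟪S, e⟫_ℂ).im ^ 2) := by
        apply Real.sqrt_le_sqrt
        gcongr
    _ = ‖⟪S, e⟫_ℂ‖ := by
        rw [Complex.norm_def, Complex.normSq_apply]; ring_nf
    _ ≤ ‖S‖ := habs
end

section
/- Let (H, ⟨·,·⟩) be a complex inner product space, let e ∈ H with ‖e‖ = 1, and let ρ₁, ρ₂ ∈ (0, 1). If the vectors x₁, …, xₙ ∈ H satisfy ‖xₖ − e‖ ≤ ρ₁ and ‖xₖ − i e‖ ≤ ρ₂ for each k ∈ {1, …, n}, then √(2 − ρ₁² − ρ₂²) · Σₖ₌₁ⁿ ‖xₖ‖ ≤ ‖Σₖ₌₁ⁿ xₖ‖. -/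
open scoped InnerProductSpace

theorem stmt_2 {H : Type*} [NormedAddCommGroup H] [InnerProductSpace ℂ H]
    (e : H) (he : ‖e‖ = 1) (ρ₁ ρ₂ : ℝ)
    (hρ₁ : ρ₁ ∈ Set.Ioo (0 : ℝ) 1) (hρ₂ : ρ₂ ∈ Set.Ioo (0 : ℝ) 1)
    (n : ℕ) (x : Fin n → H)
    (h1 : ∀ k, ‖x k - e‖ ≤ ρ₁)
    (h2 : ∀ k, ‖x k - Complex.I • e‖ ≤ ρ₂) :
    Real.sqrt (2 - ρ₁ ^ 2 - ρ₂ ^ 2) * ∑ k, ‖x k‖ ≤ ‖∑ k, x k‖ := by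
  obtain ⟨hρ1, hρ1'⟩ := hρ₁
  obtain ⟨hρ2, hρ2'⟩ := hρ₂
  set c : ℝ := 1 - (ρ₁ ^ 2 + ρ₂ ^ 2) / 2 with hc
  have hcnn : 0 ≤ c := by rw [hc]; nlinarith
  set S := ∑ k, x k with hS
  clear_value c
  have key : ∀ k, 2 * Real.sqrt c * ‖x k‖ ≤ (⟪x k, e⟫_ℂ).re - (⟪x k, e⟫_ℂ).im := by
    intro k
    have ha : ‖x k - e‖ ^ 2 ≤ ρ₁ ^ 2 := by
      have := h1 k; nlinarith [norm_nonneg (x k - e)]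
    have hb : ‖x k - Complex.I • e‖ ^ 2 ≤ ρ₂ ^ 2 := by
      have := h2 k; nlinarith [norm_nonneg (x k - Complex.I • e)]
    rw [@norm_sub_sq ℂ] at ha hb
    have hIe : ‖Complex.I • e‖ = 1 := by
      rw [norm_smul, he]; simp
    have hinner : (⟪x k, Complex.I • e⟫_ℂ) = Complex.I * ⟪x k, e⟫_ℂ := by
      rw [inner_smul_right]
    rw [hinner, hIe] at hb
    rw [he] at ha
    have hre : RCLike.re (⟪x k, e⟫_ℂ) = (⟪x k, e⟫_ℂ).re := rfl
    have hre2 : RCLike.re (Complex.I * ⟪x k, e⟫_ℂ) = -(⟪x k, e⟫_ℂ).im := by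
      simp [Complex.mul_re]
    rw [hre] at ha
    rw [hre2] at hb
    have hak : (‖x k‖ ^ 2 + 1 - ρ₁ ^ 2) / 2 ≤ (⟪x k, e⟫_ℂ).re := by nlinarith
    have hbk : (‖x k‖ ^ 2 + 1 - ρ₂ ^ 2) / 2 ≤ -(⟪x k, e⟫_ℂ).im := by nlinarith
    have hsq : Real.sqrt c ^ 2 = c := Real.sq_sqrt hcnn
    have h5 : 2 * Real.sqrt c * ‖x k‖ ≤ ‖x k‖ ^ 2 + c := by
      nlinarith [sq_nonneg (‖x k‖ - Real.sqrt c), hsq]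
    have h6 : c = 1 - (ρ₁ ^ 2 + ρ₂ ^ 2) / 2 := hc
    linarith
  have hsum : 2 * Real.sqrt c * ∑ k, ‖x k‖ ≤ (⟪S, e⟫_ℂ).re - (⟪S, e⟫_ℂ).im := by
    rw [hS, sum_inner, Complex.re_sum, Complex.im_sum, Finset.mul_sum,
      ← Finset.sum_sub_distrib]
    exact Finset.sum_le_sum fun k _ => key k
  have habs : (⟪S, e⟫_ℂ).re - (⟪S, e⟫_ℂ).im ≤ Real.sqrt 2 * ‖S‖ := by
    have h1' : ‖⟪S, e⟫_ℂ‖ ≤ ‖S‖ := by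
      have := norm_inner_le_norm (𝕜 := ℂ) S e
      simpa [he] using this
    have h2' : (⟪S, e⟫_ℂ).re - (⟪S, e⟫_ℂ).im ≤ Real.sqrt 2 * ‖⟪S, e⟫_ℂ‖ := by
      set z := ⟪S, e⟫_ℂ with hz
      have hrnn : 0 ≤ Real.sqrt 2 * ‖z‖ :=
        mul_nonneg (Real.sqrt_nonneg 2) (norm_nonneg z)
      rcases le_or_gt (z.re - z.im) 0 with h | h
      · exact h.trans hrnn
      · have hsq : (z.re - z.im) ^ 2 ≤ (Real.sqrt 2 * ‖z‖) ^ 2 := by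
          rw [mul_pow, Real.sq_sqrt (by norm_num : (0:ℝ) ≤ 2)]
          nlinarith [Complex.sq_norm z, Complex.normSq_apply z, sq_nonneg (z.re + z.im)]
        nlinarith [hsq, h, hrnn]
    nlinarith [Real.sqrt_nonneg 2]
  have h2s : 2 * Real.sqrt c = Real.sqrt 2 * Real.sqrt (2 - ρ₁ ^ 2 - ρ₂ ^ 2) := by
    rw [← Real.sqrt_mul (by norm_num : (0:ℝ) ≤ 2),
      show (2:ℝ) * (2 - ρ₁ ^ 2 - ρ₂ ^ 2) = 4 * c by rw [hc]; ring,
      Real.sqrt_mul (by norm_num : (0:ℝ) ≤ 4),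
      show Real.sqrt 4 = 2 by
        rw [show (4:ℝ) = 2 ^ 2 by norm_num, Real.sqrt_sq (by norm_num)]]
  have hfin : Real.sqrt 2 * (Real.sqrt (2 - ρ₁ ^ 2 - ρ₂ ^ 2) * ∑ k, ‖x k‖) ≤
      Real.sqrt 2 * ‖S‖ := by
    calc Real.sqrt 2 * (Real.sqrt (2 - ρ₁ ^ 2 - ρ₂ ^ 2) * ∑ k, ‖x k‖)
        = 2 * Real.sqrt c * ∑ k, ‖x k‖ := by rw [h2s]; ring
      _ ≤ _ := le_trans hsum habs
  exact le_of_mul_le_mul_left hfin (Real.sqrt_pos.mpr (by norm_num))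
end

section
/- Let (H, ⟨·,·⟩) be a complex inner product space, let e ∈ H with ‖e‖ = 1, and let ρ₁, ρ₂ ∈ (0, 1). Suppose the vectors x₁, …, xₙ ∈ H satisfy ‖xₖ − e‖ ≤ ρ₁ and ‖xₖ − i e‖ ≤ ρ₂ for each k ∈ {1, …, n}. Then equality holds in the inequality √(2 − ρ₁² − ρ₂²) · Σₖ₌₁ⁿ ‖xₖ‖ ≤ ‖Σₖ₌₁ⁿ xₖ‖ if and only if Σₖ₌₁ⁿ xₖ = (√(1 − ρ₁²) + i√(1 − ρ₂²))(Σₖ₌₁ⁿ ‖xₖ‖) e. -/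
open scoped InnerProductSpace

theorem stmt_3 {H : Type*} [NormedAddCommGroup H] [InnerProductSpace ℂ H]
    (e : H) (he : ‖e‖ = 1) (ρ₁ ρ₂ : ℝ)
    (hρ₁ : ρ₁ ∈ Set.Ioo (0 : ℝ) 1) (hρ₂ : ρ₂ ∈ Set.Ioo (0 : ℝ) 1)
    (n : ℕ) (x : Fin n → H)
    (h1 : ∀ k, ‖x k - e‖ ≤ ρ₁)
    (h2 : ∀ k, ‖x k - Complex.I • e‖ ≤ ρ₂) :
    Real.sqrt (2 - ρ₁ ^ 2 - ρ₂ ^ 2) * ∑ k, ‖x k‖ = ‖∑ k, x k‖ ↔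
      ∑ k, x k =
        ((Real.sqrt (1 - ρ₁ ^ 2) : ℂ) + Complex.I * (Real.sqrt (1 - ρ₂ ^ 2) : ℂ)) •
          (∑ k, ‖x k‖) • e := by
  obtain ⟨hρ₁0, hρ₁1⟩ := hρ₁
  obtain ⟨hρ₂0, hρ₂1⟩ := hρ₂
  set a := Real.sqrt (1 - ρ₁ ^ 2) with ha_def
  set b := Real.sqrt (1 - ρ₂ ^ 2) with hb_def
  have h1' : (0:ℝ) < 1 - ρ₁^2 := by nlinarith
  have h2' : (0:ℝ) < 1 - ρ₂^2 := by nlinarith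
  have ha2 : a^2 = 1 - ρ₁^2 := Real.sq_sqrt h1'.le
  have hb2 : b^2 = 1 - ρ₂^2 := Real.sq_sqrt h2'.le
  have ha0 : 0 ≤ a := Real.sqrt_nonneg _
  have hb0 : 0 ≤ b := Real.sqrt_nonneg _
  set S := ∑ k, x k with hS_def
  set T := ∑ k, ‖x k‖ with hT_def
  have hT0 : 0 ≤ T := Finset.sum_nonneg fun k _ => norm_nonneg _
  have hc : (2 - ρ₁^2 - ρ₂^2) = a^2 + b^2 := by rw [ha2, hb2]; ring
  -- pointwise bounds
  have hre : ∀ k, a * ‖x k‖ ≤ (⟪e, x k⟫_ℂ).re := by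
    intro k
    have key := @norm_sub_sq ℂ H _ _ _ (x k) e
    have hk1 : ‖x k - e‖^2 ≤ ρ₁^2 := pow_le_pow_left₀ (norm_nonneg _) (h1 k) 2
    rw [inner_re_symm] at key
    simp only [RCLike.re_to_complex] at key
    nlinarith [sq_nonneg (‖x k‖ - a), he]
  have him : ∀ k, b * ‖x k‖ ≤ (⟪e, x k⟫_ℂ).im := by
    intro k
    have key := @norm_sub_sq ℂ H _ _ _ (x k) (Complex.I • e)
    have hIe : ‖Complex.I • e‖ = 1 := by rw [norm_smul]; simp [he]
    have hin : RCLike.re (⟪x k, Complex.I • e⟫_ℂ) = (⟪e, x k⟫_ℂ).im := by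
      rw [inner_smul_right]
      simp only [RCLike.re_to_complex, Complex.mul_re, Complex.I_re, Complex.I_im]
      have := inner_im_symm (𝕜 := ℂ) e (x k)
      simp only [RCLike.im_to_complex] at this
      simp [this]
    have hk1 : ‖x k - Complex.I • e‖^2 ≤ ρ₂^2 := pow_le_pow_left₀ (norm_nonneg _) (h2 k) 2
    rw [hIe, hin] at key
    nlinarith [sq_nonneg (‖x k‖ - b)]
  have hsum : (⟪e, S⟫_ℂ) = ∑ k, ⟪e, x k⟫_ℂ := inner_sum Finset.univ x e
  have hSre : a * T ≤ (⟪e, S⟫_ℂ).re := by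
    rw [hsum, Complex.re_sum, hT_def, Finset.mul_sum]
    exact Finset.sum_le_sum fun k _ => hre k
  have hSim : b * T ≤ (⟪e, S⟫_ℂ).im := by
    rw [hsum, Complex.im_sum, hT_def, Finset.mul_sum]
    exact Finset.sum_le_sum fun k _ => him k
  have haT : 0 ≤ a * T := mul_nonneg ha0 hT0
  have hbT : 0 ≤ b * T := mul_nonneg hb0 hT0
  have hre0 : 0 ≤ (⟪e, S⟫_ℂ).re := le_trans haT hSre
  have him0 : 0 ≤ (⟪e, S⟫_ℂ).im := le_trans hbT hSim
  have habs2 : ‖⟪e, S⟫_ℂ‖^2 = (⟪e, S⟫_ℂ).re^2 + (⟪e, S⟫_ℂ).im^2 := by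
    rw [Complex.sq_norm, Complex.normSq_apply]; ring
  constructor
  · intro heq
    have habs : ‖⟪e, S⟫_ℂ‖ ≤ ‖S‖ := by
      have := norm_inner_le_norm (𝕜 := ℂ) e S
      simpa [he] using this
    have hnormsq : ‖S‖^2 = (a^2+b^2) * T^2 := by
      rw [← heq, mul_pow, hc, Real.sq_sqrt (by positivity)]
    have habs2' : (⟪e, S⟫_ℂ).re^2 + (⟪e, S⟫_ℂ).im^2 ≤ (a^2+b^2) * T^2 := by
      rw [← habs2, ← hnormsq]
      exact pow_le_pow_left₀ (norm_nonneg _) habs 2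
    have h5 : (a*T)^2 ≤ (⟪e, S⟫_ℂ).re^2 := pow_le_pow_left₀ haT hSre 2
    have h6 : (b*T)^2 ≤ (⟪e, S⟫_ℂ).im^2 := pow_le_pow_left₀ hbT hSim 2
    have hid : (a*T)^2 + (b*T)^2 = (a^2+b^2)*T^2 := by ring
    have hre_sq : (⟪e, S⟫_ℂ).re^2 ≤ (a*T)^2 := by linarith
    have him_sq : (⟪e, S⟫_ℂ).im^2 ≤ (b*T)^2 := by linarith
    have hre_eq : (⟪e, S⟫_ℂ).re = a*T :=
      le_antisymm ((pow_le_pow_iff_left₀ hre0 haT (by norm_num)).mp hre_sq) hSre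
    have him_eq : (⟪e, S⟫_ℂ).im = b*T :=
      le_antisymm ((pow_le_pow_iff_left₀ him0 hbT (by norm_num)).mp him_sq) hSim
    have hz : (⟪e, S⟫_ℂ) = ((a:ℂ) + Complex.I * b) * T := by
      apply Complex.ext <;>
        simp [hre_eq, him_eq, Complex.add_re, Complex.add_im, Complex.mul_re, Complex.mul_im]
    have habs_eq : ‖⟪e, S⟫_ℂ‖^2 = ‖S‖^2 := by
      rw [habs2, hre_eq, him_eq, hnormsq]; ring
    have hw : ‖S - (⟪e, S⟫_ℂ) • e‖^2 = 0 := by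
      have hip : (⟪S, (⟪e, S⟫_ℂ) • e⟫_ℂ) = ((Complex.normSq (⟪e, S⟫_ℂ) : ℝ) : ℂ) := by
        rw [inner_smul_right, ← inner_conj_symm S e, Complex.mul_conj]
      have expand := @norm_sub_sq ℂ H _ _ _ S ((⟪e, S⟫_ℂ) • e)
      rw [hip, norm_smul, he, mul_one] at expand
      simp only [RCLike.re_to_complex, Complex.ofReal_re] at expand
      have hn : ‖(⟪e, S⟫_ℂ)‖^2 = Complex.normSq (⟪e, S⟫_ℂ) := by
        rw [Complex.sq_norm]
      rw [expand]
      linarith [hn, habs_eq]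
    have hSe : S = (⟪e, S⟫_ℂ) • e := by
      have h7 : S - (⟪e, S⟫_ℂ) • e = 0 :=
        norm_eq_zero.mp (pow_eq_zero_iff (n := 2) (by norm_num) |>.mp hw)
      exact sub_eq_zero.mp h7
    rw [hSe, hz, ← Complex.coe_smul, smul_smul]
  · intro h
    rw [h, norm_smul, norm_smul, he, mul_one, Real.norm_eq_abs, abs_of_nonneg hT0]
    have hnab : ‖((a:ℂ) + Complex.I * b)‖ = Real.sqrt (a^2+b^2) := by
      rw [Complex.norm_def, Complex.normSq_apply]
      simp only [Complex.add_re, Complex.add_im, Complex.mul_re, Complex.mul_im,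
        Complex.I_re, Complex.I_im, Complex.ofReal_re, Complex.ofReal_im]
      ring_nf
    rw [hnab, hc]
end

section
/- Let (H, ⟨·,·⟩) be a complex inner product space, let e ∈ H with ‖e‖ = 1, and let M₁ ≥ m₁ > 0 and M₂ ≥ m₂ > 0. If the vectors x₁, …, xₙ ∈ H satisfy Re⟨M₁e − xₖ, xₖ − m₁e⟩ ≥ 0 and Re⟨M₂ie − xₖ, xₖ − m₂ie⟩ ≥ 0 for each k ∈ {1, …, n}, then 2·[m₁M₁/(M₁ + m₁)² + m₂M₂/(M₂ + m₂)²]^{1/2} · Σₖ₌₁ⁿ ‖xₖ‖ ≤ ‖Σₖ₌₁ⁿ xₖ‖. -/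
open scoped InnerProductSpace

lemma aux_key {H : Type*} [NormedAddCommGroup H] [InnerProductSpace ℂ H]
    (f : H) (hf : ‖f‖ = 1) (m M : ℝ) (hm : 0 < m) (hM : m ≤ M) (v : H)
    (h : 0 ≤ (⟪M • f - v, v - m • f⟫_ℂ).re) :
    2 * Real.sqrt (m * M) / (M + m) * ‖v‖ ≤ (⟪v, f⟫_ℂ).re := by
  have hsym : (⟪f, v⟫_ℂ).re = (⟪v, f⟫_ℂ).re := by
    rw [← inner_conj_symm f v, Complex.conj_re]
  have hre : (⟪M • f - v, v - m • f⟫_ℂ).re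
      = (M + m) * (⟪v, f⟫_ℂ).re - m * M - ‖v‖ ^ 2 := by
    simp only [inner_sub_left, inner_sub_right, ← Complex.coe_smul, inner_smul_left,
      inner_smul_right, Complex.conj_ofReal, inner_self_eq_norm_sq_to_K,
      ← Complex.ofReal_pow, Complex.sub_re, Complex.add_re, Complex.mul_re,
      Complex.ofReal_re, Complex.ofReal_im, hf, hsym]
    ring_nf
    simp [hsym, ← Complex.ofReal_pow]
  rw [hre] at h
  have hs : Real.sqrt (m * M) ^ 2 = m * M := Real.sq_sqrt (mul_nonneg hm.le (hm.trans_le hM).le)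
  have hMm : 0 < M + m := by linarith
  rw [div_mul_eq_mul_div, div_le_iff₀ hMm]
  nlinarith [sq_nonneg (‖v‖ - Real.sqrt (m * M)), norm_nonneg v, Real.sqrt_nonneg (m * M)]

theorem stmt_4 {H : Type*} [NormedAddCommGroup H] [InnerProductSpace ℂ H]
    (e : H) (he : ‖e‖ = 1) (m₁ M₁ m₂ M₂ : ℝ)
    (hm₁ : 0 < m₁) (hM₁ : m₁ ≤ M₁) (hm₂ : 0 < m₂) (hM₂ : m₂ ≤ M₂)
    (n : ℕ) (x : Fin n → H)
    (h1 : ∀ k, 0 ≤ (⟪M₁ • e - x k, x k - m₁ • e⟫_ℂ).re)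
    (h2 : ∀ k, 0 ≤ (⟪M₂ • (Complex.I • e) - x k, x k - m₂ • (Complex.I • e)⟫_ℂ).re) :
    2 * Real.sqrt (m₁ * M₁ / (M₁ + m₁) ^ 2 + m₂ * M₂ / (M₂ + m₂) ^ 2) * ∑ k, ‖x k‖ ≤
      ‖∑ k, x k‖ := by
  set S := ∑ k, x k with hS
  set A := ∑ k, ‖x k‖ with hAdef
  have hA : 0 ≤ A := Finset.sum_nonneg fun k _ => norm_nonneg _
  set r₁ := 2 * Real.sqrt (m₁ * M₁) / (M₁ + m₁) with hr₁
  set r₂ := 2 * Real.sqrt (m₂ * M₂) / (M₂ + m₂) with hr₂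
  have hr₁0 : 0 ≤ r₁ := by
    apply div_nonneg (by positivity); linarith
  have hr₂0 : 0 ≤ r₂ := by
    apply div_nonneg (by positivity); linarith
  have hf : ‖Complex.I • e‖ = 1 := by
    rw [norm_smul, Complex.norm_I, he, one_mul]
  have hre1 : r₁ * A ≤ (⟪S, e⟫_ℂ).re := by
    have : (⟪S, e⟫_ℂ).re = ∑ k, (⟪x k, e⟫_ℂ).re := by
      rw [hS, sum_inner]; exact Complex.re_sum _ _
    rw [this, hAdef, Finset.mul_sum]
    exact Finset.sum_le_sum fun k _ => aux_key e he m₁ M₁ hm₁ hM₁ (x k) (h1 k)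
  have hre2 : r₂ * A ≤ -(⟪S, e⟫_ℂ).im := by
    have him : (⟪S, Complex.I • e⟫_ℂ).re = -(⟪S, e⟫_ℂ).im := by
      rw [inner_smul_right]; simp
    rw [← him]
    have : (⟪S, Complex.I • e⟫_ℂ).re = ∑ k, (⟪x k, Complex.I • e⟫_ℂ).re := by
      rw [hS, sum_inner]; exact Complex.re_sum _ _
    rw [this, hAdef, Finset.mul_sum]
    exact Finset.sum_le_sum fun k _ => aux_key _ hf m₂ M₂ hm₂ hM₂ (x k) (h2 k)
  have habs : ‖⟪S, e⟫_ℂ‖ ≤ ‖S‖ := by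
    have := norm_inner_le_norm (𝕜 := ℂ) S e
    rwa [he, mul_one] at this
  have hsq : ‖⟪S, e⟫_ℂ‖ ^ 2 = (⟪S, e⟫_ℂ).re ^ 2 + (⟪S, e⟫_ℂ).im ^ 2 := by
    rw [Complex.sq_norm, Complex.normSq_apply]; ring
  have hq : Real.sqrt (m₁ * M₁ / (M₁ + m₁) ^ 2 + m₂ * M₂ / (M₂ + m₂) ^ 2) ^ 2
      = m₁ * M₁ / (M₁ + m₁) ^ 2 + m₂ * M₂ / (M₂ + m₂) ^ 2 := by
    apply Real.sq_sqrt
    have h1' : 0 ≤ m₁ * M₁ := mul_nonneg hm₁.le (hm₁.trans_le hM₁).le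
    have h2' : 0 ≤ m₂ * M₂ := mul_nonneg hm₂.le (hm₂.trans_le hM₂).le
    exact add_nonneg (div_nonneg h1' (sq_nonneg _)) (div_nonneg h2' (sq_nonneg _))
  have hs1 : Real.sqrt (m₁ * M₁) ^ 2 = m₁ * M₁ :=
    Real.sq_sqrt (mul_nonneg hm₁.le (hm₁.trans_le hM₁).le)
  have hs2 : Real.sqrt (m₂ * M₂) ^ 2 = m₂ * M₂ :=
    Real.sq_sqrt (mul_nonneg hm₂.le (hm₂.trans_le hM₂).le)
  have hr₁sq : r₁ ^ 2 = 4 * (m₁ * M₁ / (M₁ + m₁) ^ 2) := by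
    rw [hr₁, div_pow, mul_pow, hs1]; ring
  have hr₂sq : r₂ ^ 2 = 4 * (m₂ * M₂ / (M₂ + m₂) ^ 2) := by
    rw [hr₂, div_pow, mul_pow, hs2]; ring
  have key : (2 * Real.sqrt (m₁ * M₁ / (M₁ + m₁) ^ 2 + m₂ * M₂ / (M₂ + m₂) ^ 2) * A) ^ 2
      ≤ ‖S‖ ^ 2 := by
    have h1sq : (r₁ * A) ^ 2 ≤ (⟪S, e⟫_ℂ).re ^ 2 := by
      nlinarith [mul_nonneg hr₁0 hA]
    have h2sq : (r₂ * A) ^ 2 ≤ (⟪S, e⟫_ℂ).im ^ 2 := by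
      nlinarith [mul_nonneg hr₂0 hA]
    have habs2 : ‖⟪S, e⟫_ℂ‖ ^ 2 ≤ ‖S‖ ^ 2 :=
      pow_le_pow_left₀ (norm_nonneg _) habs 2
    have hLsq : (2 * Real.sqrt (m₁ * M₁ / (M₁ + m₁) ^ 2 + m₂ * M₂ / (M₂ + m₂) ^ 2) * A) ^ 2
        = (r₁ * A) ^ 2 + (r₂ * A) ^ 2 := by
      rw [mul_pow, mul_pow, mul_pow, mul_pow, hq, hr₁sq, hr₂sq]; ring
    calc (2 * Real.sqrt (m₁ * M₁ / (M₁ + m₁) ^ 2 + m₂ * M₂ / (M₂ + m₂) ^ 2) * A) ^ 2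
        = (r₁ * A) ^ 2 + (r₂ * A) ^ 2 := hLsq
      _ ≤ (⟪S, e⟫_ℂ).re ^ 2 + (⟪S, e⟫_ℂ).im ^ 2 := add_le_add h1sq h2sq
      _ = ‖⟪S, e⟫_ℂ‖ ^ 2 := hsq.symm
      _ ≤ ‖S‖ ^ 2 := habs2
  exact le_of_pow_le_pow_left₀ two_ne_zero (norm_nonneg S) key
end

section
/- Let (H, ⟨·,·⟩) be a complex inner product space, let e ∈ H with ‖e‖ = 1, and let M₁ ≥ m₁ > 0 and M₂ ≥ m₂ > 0. Suppose the vectors x₁, …, xₙ ∈ H satisfy Re⟨M₁e − xₖ, xₖ − m₁e⟩ ≥ 0 and Re⟨M₂ie − xₖ, xₖ − m₂ie⟩ ≥ 0 for each k ∈ {1, …, n}. Then equality holds in the inequality 2·[m₁M₁/(M₁ + m₁)² + m₂M₂/(M₂ + m₂)²]^{1/2} · Σₖ₌₁ⁿ ‖xₖ‖ ≤ ‖Σₖ₌₁ⁿ xₖ‖ if and only if Σₖ₌₁ⁿ xₖ = 2(√(m₁M₁)/(M₁ + m₁) + i·√(m₂M₂)/(M₂ + m₂))(Σₖ₌₁ⁿ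 ‖xₖ‖) e. -/
open scoped InnerProductSpace

lemma auxA {H : Type*} [NormedAddCommGroup H] [InnerProductSpace ℂ H]
    (f : H) (hf : ‖f‖ = 1) (m M : ℝ) (hm : 0 < m) (hM : m ≤ M) (y : H)
    (h : 0 ≤ (⟪M • f - y, y - m • f⟫_ℂ).re) :
    2 * Real.sqrt (m * M) / (M + m) * ‖y‖ ≤ (⟪f, y⟫_ℂ).re := by
  have hMm : 0 < M + m := by linarith
  have hre : (⟪y, f⟫_ℂ).re = (⟪f, y⟫_ℂ).re := by
    rw [← inner_conj_symm, Complex.conj_re]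
  have expand : (⟪M • f - y, y - m • f⟫_ℂ).re
      = (M + m) * (⟪f, y⟫_ℂ).re - ‖y‖ ^ 2 - m * M := by
    have h1 : (M : ℂ) • f = M • f := by simp
    have h2 : (m : ℂ) • f = m • f := by simp
    rw [← h1, ← h2]
    simp only [inner_sub_left, inner_sub_right, inner_smul_left, inner_smul_right,
      inner_self_eq_norm_sq_to_K]
    simp [hf, hre, ← Complex.ofReal_pow]
    ring
  have hsq : 2 * Real.sqrt (m * M) * ‖y‖ ≤ ‖y‖ ^ 2 + m * M := by
    have h0 : 0 ≤ m * M := mul_nonneg hm.le (hm.trans_le hM).le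
    nlinarith [sq_nonneg (‖y‖ - Real.sqrt (m * M)), Real.sq_sqrt h0]
  rw [div_mul_eq_mul_div, div_le_iff₀ hMm]
  nlinarith [expand ▸ h]

lemma auxEq (p q a b : ℝ) (hp : 0 ≤ p) (hq : 0 ≤ q) (hpa : p ≤ a) (hqb : q ≤ b)
    (h : a ^ 2 + b ^ 2 ≤ p ^ 2 + q ^ 2) : a = p ∧ b = q := by
  have h1 : p ^ 2 ≤ a ^ 2 := by nlinarith
  have h2 : q ^ 2 ≤ b ^ 2 := by nlinarith
  constructor
  · apply le_antisymm _ hpa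
    nlinarith [sq_nonneg (a - p), sq_nonneg (a + p)]
  · apply le_antisymm _ hqb
    nlinarith [sq_nonneg (b - q), sq_nonneg (b + q)]

theorem stmt_5 {H : Type*} [NormedAddCommGroup H] [InnerProductSpace ℂ H]
    (e : H) (he : ‖e‖ = 1) (m₁ M₁ m₂ M₂ : ℝ)
    (hm₁ : 0 < m₁) (hM₁ : m₁ ≤ M₁) (hm₂ : 0 < m₂) (hM₂ : m₂ ≤ M₂)
    (n : ℕ) (x : Fin n → H)
    (h1 : ∀ k, 0 ≤ (⟪M₁ • e - x k, x k - m₁ • e⟫_ℂ).re)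
    (h2 : ∀ k, 0 ≤ (⟪M₂ • (Complex.I • e) - x k, x k - m₂ • (Complex.I • e)⟫_ℂ).re) :
    2 * Real.sqrt (m₁ * M₁ / (M₁ + m₁) ^ 2 + m₂ * M₂ / (M₂ + m₂) ^ 2) * ∑ k, ‖x k‖ =
        ‖∑ k, x k‖ ↔
      ∑ k, x k =
        (2 * ((Real.sqrt (m₁ * M₁) / (M₁ + m₁) : ℂ) +
            Complex.I * (Real.sqrt (m₂ * M₂) / (M₂ + m₂) : ℂ))) • (∑ k, ‖x k‖) • e := by
  set S : ℝ := ∑ k, ‖x k‖ with hS_def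
  set s : H := ∑ k, x k with hs_def
  set r₁ : ℝ := 2 * Real.sqrt (m₁ * M₁) / (M₁ + m₁) with hr1_def
  set r₂ : ℝ := 2 * Real.sqrt (m₂ * M₂) / (M₂ + m₂) with hr2_def
  set c : ℝ := 2 * Real.sqrt (m₁ * M₁ / (M₁ + m₁) ^ 2 + m₂ * M₂ / (M₂ + m₂) ^ 2) with hc_def
  have hMm1 : 0 < M₁ + m₁ := by linarith
  have hMm2 : 0 < M₂ + m₂ := by linarith
  have h01 : 0 ≤ m₁ * M₁ := mul_nonneg hm₁.le (hm₁.trans_le hM₁).le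
  have h02 : 0 ≤ m₂ * M₂ := mul_nonneg hm₂.le (hm₂.trans_le hM₂).le
  have hS0 : 0 ≤ S := Finset.sum_nonneg fun k _ => norm_nonneg _
  have hr1 : 0 ≤ r₁ := by positivity
  have hr2 : 0 ≤ r₂ := by positivity
  have hc0 : 0 ≤ c := by positivity
  have hr1sq : r₁ ^ 2 = 4 * (m₁ * M₁) / (M₁ + m₁) ^ 2 := by
    rw [hr1_def, div_pow, mul_pow, Real.sq_sqrt h01]; ring
  have hr2sq : r₂ ^ 2 = 4 * (m₂ * M₂) / (M₂ + m₂) ^ 2 := by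
    rw [hr2_def, div_pow, mul_pow, Real.sq_sqrt h02]; ring
  have hA0 : 0 ≤ m₁ * M₁ / (M₁ + m₁) ^ 2 + m₂ * M₂ / (M₂ + m₂) ^ 2 := by positivity
  have hc2 : c ^ 2 = r₁ ^ 2 + r₂ ^ 2 := by
    rw [hc_def, mul_pow, Real.sq_sqrt hA0, hr1sq, hr2sq]; ring
  have hfI : ‖Complex.I • e‖ = 1 := by
    rw [norm_smul, he]; simp
  have himre : ∀ y : H, (⟪Complex.I • e, y⟫_ℂ).re = (⟪e, y⟫_ℂ).im := by
    intro y
    rw [inner_smul_left]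
    simp [Complex.mul_re]
  have hRe : r₁ * S ≤ (⟪e, s⟫_ℂ).re := by
    have hsum : (⟪e, s⟫_ℂ).re = ∑ k, (⟪e, x k⟫_ℂ).re := by
      rw [hs_def, inner_sum, Complex.re_sum]
    rw [hsum, hS_def, Finset.mul_sum]
    exact Finset.sum_le_sum fun k _ => auxA e he m₁ M₁ hm₁ hM₁ (x k) (h1 k)
  have hIm : r₂ * S ≤ (⟪e, s⟫_ℂ).im := by
    have hsum : (⟪e, s⟫_ℂ).im = ∑ k, (⟪Complex.I • e, x k⟫_ℂ).re := by
      rw [hs_def, inner_sum, Complex.im_sum]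
      exact Finset.sum_congr rfl fun k _ => (himre (x k)).symm
    rw [hsum, hS_def, Finset.mul_sum]
    exact Finset.sum_le_sum fun k _ =>
      auxA (Complex.I • e) hfI m₂ M₂ hm₂ hM₂ (x k) (h2 k)
  have hnormsq : ‖(⟪e, s⟫_ℂ)‖ ^ 2 = (⟪e, s⟫_ℂ).re ^ 2 + (⟪e, s⟫_ℂ).im ^ 2 := by
    rw [Complex.sq_norm, Complex.normSq_apply]; ring
  have hCS : ‖(⟪e, s⟫_ℂ)‖ ≤ ‖s‖ := by
    have := norm_inner_le_norm (𝕜 := ℂ) e s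
    rwa [he, one_mul] at this
  set z : ℂ := 2 * ((Real.sqrt (m₁ * M₁) / (M₁ + m₁) : ℂ) +
      Complex.I * (Real.sqrt (m₂ * M₂) / (M₂ + m₂) : ℂ)) with hz_def
  have hzval : z = (r₁ : ℂ) + (r₂ : ℂ) * Complex.I := by
    rw [hz_def, hr1_def, hr2_def]; push_cast; ring
  have hzre : z.re = r₁ := by rw [hzval]; simp
  have hzim : z.im = r₂ := by rw [hzval]; simp
  have hznorm : ‖z‖ = c := by
    have hsq : ‖z‖ ^ 2 = c ^ 2 := by
      have : ‖z‖ ^ 2 = z.re ^ 2 + z.im ^ 2 := by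
        rw [Complex.sq_norm, Complex.normSq_apply]; ring
      rw [this, hzre, hzim, hc2]
    calc ‖z‖ = Real.sqrt (‖z‖ ^ 2) := (Real.sqrt_sq (norm_nonneg z)).symm
      _ = Real.sqrt (c ^ 2) := by rw [hsq]
      _ = c := Real.sqrt_sq hc0
  have hsmul : S • e = ((S : ℂ)) • e := RCLike.real_smul_eq_coe_smul (K := ℂ) S e
  constructor
  · intro heq
    have hRe0 : 0 ≤ r₁ * S := mul_nonneg hr1 hS0
    have hIm0 : 0 ≤ r₂ * S := mul_nonneg hr2 hS0
    have hs2 : ‖s‖ ^ 2 = c ^ 2 * S ^ 2 := by rw [← heq]; ring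
    have hle : (⟪e, s⟫_ℂ).re ^ 2 + (⟪e, s⟫_ℂ).im ^ 2 ≤ (r₁ * S) ^ 2 + (r₂ * S) ^ 2 := by
      calc (⟪e, s⟫_ℂ).re ^ 2 + (⟪e, s⟫_ℂ).im ^ 2 = ‖(⟪e, s⟫_ℂ)‖ ^ 2 := hnormsq.symm
        _ ≤ ‖s‖ ^ 2 := pow_le_pow_left₀ (norm_nonneg _) hCS 2
        _ = (r₁ * S) ^ 2 + (r₂ * S) ^ 2 := by rw [hs2, hc2]; ring
    obtain ⟨hReq, hImq⟩ := auxEq (r₁ * S) (r₂ * S) _ _ hRe0 hIm0 hRe hIm hle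
    have hinnernorm : ‖(⟪e, s⟫_ℂ)‖ ^ 2 = ‖s‖ ^ 2 := by
      rw [hnormsq, hReq, hImq, hs2, hc2]; ring
    have hz0 : ‖s - (⟪e, s⟫_ℂ) • e‖ ^ 2 = 0 := by
      have hre2 : (⟪s, (⟪e, s⟫_ℂ) • e⟫_ℂ).re = ‖(⟪e, s⟫_ℂ)‖ ^ 2 := by
        rw [inner_smul_right, ← inner_conj_symm s e, Complex.mul_conj]
        simp [Complex.normSq_eq_norm_sq, ← Complex.ofReal_pow]
      rw [@norm_sub_sq ℂ, norm_smul, he, mul_one]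
      simp only [RCLike.re_to_complex]
      rw [hre2]
      linarith [hinnernorm]
    have hkey : s = (⟪e, s⟫_ℂ) • e := by
      have := (pow_eq_zero_iff (n := 2) (by norm_num)).mp hz0
      rw [norm_eq_zero, sub_eq_zero] at this
      exact this
    have hval : (⟪e, s⟫_ℂ) = z * (S : ℂ) := by
      apply Complex.ext
      · simp [Complex.mul_re, hzre, hzim, hReq]
      · simp [Complex.mul_im, hzre, hzim, hImq]
    rw [hkey, hval, hsmul, smul_smul]
  · intro heq
    rw [heq, norm_smul, norm_smul, hznorm, he, mul_one, Real.norm_eq_abs, abs_of_nonneg hS0]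
end

section
/- Let (H, ⟨·,·⟩) be a complex inner product space, let e ∈ H with ‖e‖ = 1, and let M ≥ m > 0. If x ∈ H satisfies Re⟨M e − x, x − m e⟩ ≥ 0, then 0 ≤ (2√(mM)/(M + m))‖x‖ ≤ Re⟨x, e⟩. -/
open scoped InnerProductSpace

theorem stmt_7 {H : Type*} [NormedAddCommGroup H] [InnerProductSpace ℂ H]
    (e : H) (he : ‖e‖ = 1) (m M : ℝ) (hm : 0 < m) (hM : m ≤ M)
    (x : H) (hx : 0 ≤ (⟪M • e - x, x - m • e⟫_ℂ).re) :
    0 ≤ (2 * Real.sqrt (m * M) / (M + m)) * ‖x‖ ∧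
      (2 * Real.sqrt (m * M) / (M + m)) * ‖x‖ ≤ (⟪x, e⟫_ℂ).re := by
  have hee : (⟪e, e⟫_ℂ).re = 1 := by
    have := @inner_self_eq_norm_sq ℂ H _ _ _ e
    rw [he] at this; simpa [RCLike.re_to_complex] using this
  have hxx : (⟪x, x⟫_ℂ).re = ‖x‖ ^ 2 := by
    have := @inner_self_eq_norm_sq ℂ H _ _ _ x
    simpa [RCLike.re_to_complex] using this
  have hsym : (⟪e, x⟫_ℂ).re = (⟪x, e⟫_ℂ).re := by
    rw [← inner_conj_symm x e, Complex.conj_re]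
  have h1 : ‖x‖ ^ 2 + m * M ≤ (M + m) * (⟪x, e⟫_ℂ).re := by
    simp only [← algebraMap_smul ℂ M e, ← algebraMap_smul ℂ m e,
      Complex.coe_algebraMap, inner_sub_left, inner_sub_right,
      inner_smul_left, inner_smul_right, Complex.conj_ofReal, Complex.sub_re,
      Complex.mul_re,
      Complex.ofReal_re, Complex.ofReal_im, zero_mul, mul_zero, sub_zero] at hx
    rw [hee, hsym, hxx] at hx
    nlinarith [hx]
  have hs : Real.sqrt (m * M) ^ 2 = m * M :=
    Real.sq_sqrt (mul_nonneg hm.le (hm.trans_le hM).le)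
  have h2 : 2 * Real.sqrt (m * M) * ‖x‖ ≤ (M + m) * (⟪x, e⟫_ℂ).re := by
    nlinarith [sq_nonneg (‖x‖ - Real.sqrt (m * M))]
  have hMm : 0 < M + m := by linarith
  constructor
  · positivity
  · rw [div_mul_eq_mul_div, div_le_iff₀ hMm]
    nlinarith
end

section
/- Let (H, ⟨·,·⟩) be a (real or complex) inner product space and let e₁, …, eₘ be orthonormal vectors in H, i.e. ⟨eᵢ, eⱼ⟩ = 0 for i ≠ j and ‖eᵢ‖ = 1 for all i. Let r₁, …, rₘ ≥ 0. If the vectors x₁, …, xₙ ∈ H satisfy 0 ≤ rₖ‖xⱼ‖ ≤ Re⟨xⱼ, eₖ⟩ for all j ∈ {1, …, n} and k ∈ {1, …, m}, then (Σₖ₌₁ᵐ rₖ²)^{1/2} · Σⱼ₌₁ⁿ ‖xⱼ‖ ≤ ‖Σⱼ₌₁ⁿ xⱼ‖. -/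
open scoped InnerProductSpace

theorem stmt_9 {𝕜 : Type*} [RCLike 𝕜] {H : Type*} [NormedAddCommGroup H]
    [InnerProductSpace 𝕜 H] (m : ℕ) (e : Fin m → H) (he : Orthonormal 𝕜 e)
    (r : Fin m → ℝ) (hr : ∀ k, 0 ≤ r k)
    (n : ℕ) (x : Fin n → H)
    (h : ∀ j k, r k * ‖x j‖ ≤ RCLike.re (⟪x j, e k⟫_𝕜)) :
    Real.sqrt (∑ k, r k ^ 2) * ∑ j, ‖x j‖ ≤ ‖∑ j, x j‖ := by
  set A : ℝ := ∑ k, r k ^ 2 with hA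
  have hA0 : 0 ≤ A := Finset.sum_nonneg fun k _ => sq_nonneg _
  set y : H := ∑ k, (r k : 𝕜) • e k with hy
  -- norm of y
  have hyn : ‖y‖ = Real.sqrt A := by
    have h1 : (⟪y, y⟫_𝕜) = (A : ℝ) := by
      rw [hy, sum_inner]
      have : ∀ k : Fin m, ⟪(r k : 𝕜) • e k, y⟫_𝕜 = ((r k ^ 2 : ℝ) : 𝕜) := by
        intro k
        rw [inner_smul_left, he.inner_right_fintype]
        rw [RCLike.conj_ofReal, ← RCLike.ofReal_mul, ← sq]
      rw [Finset.sum_congr rfl fun k _ => this k, hA]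
      push_cast
      ring
    have h2 : ‖y‖ ^ 2 = A := by
      have := @inner_self_eq_norm_sq 𝕜 _ _ _ _ y
      rw [← this]
      have := congrArg RCLike.re h1
      simpa using this
    rw [← h2, Real.sqrt_sq (norm_nonneg _)]
  -- lower bound on re ⟪∑ x j, y⟫
  have key : A * ∑ j, ‖x j‖ ≤ RCLike.re (⟪∑ j, x j, y⟫_𝕜) := by
    rw [sum_inner]
    rw [map_sum]
    rw [Finset.mul_sum]
    apply Finset.sum_le_sum
    intro j _
    have : RCLike.re (⟪x j, y⟫_𝕜) = ∑ k, r k * RCLike.re (⟪x j, e k⟫_𝕜) := by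
      rw [hy, inner_sum, map_sum]
      refine Finset.sum_congr rfl fun k _ => ?_
      rw [inner_smul_right]
      exact RCLike.re_ofReal_mul _ _
    rw [this, hA, Finset.sum_mul]
    apply Finset.sum_le_sum
    intro k _
    calc r k ^ 2 * ‖x j‖ = r k * (r k * ‖x j‖) := by ring
      _ ≤ r k * RCLike.re (⟪x j, e k⟫_𝕜) := by
          exact mul_le_mul_of_nonneg_left (h j k) (hr k)
  have cs : RCLike.re (⟪∑ j, x j, y⟫_𝕜) ≤ ‖∑ j, x j‖ * Real.sqrt A := by
    rw [← hyn]; exact re_inner_le_norm _ _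
  have main : A * ∑ j, ‖x j‖ ≤ ‖∑ j, x j‖ * Real.sqrt A := key.trans cs
  rcases eq_or_lt_of_le hA0 with h0 | h0
  · rw [← h0]
    simp [Real.sqrt_zero, norm_nonneg]
  · have hs : 0 < Real.sqrt A := Real.sqrt_pos.mpr h0
    rw [← mul_le_mul_iff_left₀ hs]
    calc Real.sqrt A * (∑ j, ‖x j‖) * Real.sqrt A
        = A * ∑ j, ‖x j‖ := by
          rw [mul_comm (Real.sqrt A) _, mul_assoc, Real.mul_self_sqrt hA0]
          ring
      _ ≤ ‖∑ j, x j‖ * Real.sqrt A := main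
end

section
/- Let (H, ⟨·,·⟩) be a (real or complex) inner product space, let e₁, …, eₘ be orthonormal vectors in H, and let r₁, …, rₘ ≥ 0. Suppose the vectors x₁, …, xₙ ∈ H satisfy 0 ≤ rₖ‖xⱼ‖ ≤ Re⟨xⱼ, eₖ⟩ for all j ∈ {1, …, n} and k ∈ {1, …, m}. Then equality holds in the inequality (Σₖ₌₁ᵐ rₖ²)^{1/2} · Σⱼ₌₁ⁿ ‖xⱼ‖ ≤ ‖Σⱼ₌₁ⁿ xⱼ‖ if and only if Σⱼ₌₁ⁿ xⱼ = (Σⱼ₌₁ⁿ ‖xⱼ‖) · Σₖ₌₁ᵐ rₖ eₖ. -/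
open scoped InnerProductSpace

theorem stmt_10 {𝕜 : Type*} [RCLike 𝕜] {H : Type*} [NormedAddCommGroup H]
    [InnerProductSpace 𝕜 H] (m : ℕ) (e : Fin m → H) (he : Orthonormal 𝕜 e)
    (r : Fin m → ℝ) (hr : ∀ k, 0 ≤ r k)
    (n : ℕ) (x : Fin n → H)
    (h : ∀ j k, r k * ‖x j‖ ≤ RCLike.re (⟪x j, e k⟫_𝕜)) :
    Real.sqrt (∑ k, r k ^ 2) * ∑ j, ‖x j‖ = ‖∑ j, x j‖ ↔
      ∑ j, x j = ((∑ j, ‖x j‖ : ℝ) : 𝕜) • ∑ k, ((r k : ℝ) : 𝕜) • e k := by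
  set T : ℝ := ∑ j, ‖x j‖ with hT
  have hT0 : 0 ≤ T := Finset.sum_nonneg fun j _ => norm_nonneg _
  set v : H := ∑ k, ((r k : ℝ) : 𝕜) • e k with hv
  set S : H := ∑ j, x j with hS
  have hR0 : 0 ≤ ∑ k, r k ^ 2 := Finset.sum_nonneg fun k _ => sq_nonneg _
  have hv2 : RCLike.re (⟪v, v⟫_𝕜) = ∑ k, r k ^ 2 := by
    rw [hv, he.inner_sum]
    rw [map_sum]
    refine Finset.sum_congr rfl fun k _ => ?_
    rw [RCLike.conj_ofReal, ← RCLike.ofReal_mul, RCLike.ofReal_re, sq]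
  have hvn : ‖v‖ = Real.sqrt (∑ k, r k ^ 2) := by
    rw [@norm_eq_sqrt_re_inner 𝕜, hv2]
  have hvsq : ‖v‖ ^ 2 = ∑ k, r k ^ 2 := by
    rw [hvn, Real.sq_sqrt hR0]
  have hSv : (∑ k, r k ^ 2) * T ≤ RCLike.re (⟪S, v⟫_𝕜) := by
    have h1 : RCLike.re (⟪S, v⟫_𝕜) = ∑ k, r k * ∑ j, RCLike.re (⟪x j, e k⟫_𝕜) := by
      rw [hv, inner_sum, map_sum]
      refine Finset.sum_congr rfl fun k _ => ?_
      rw [inner_smul_right, RCLike.re_ofReal_mul, hS, sum_inner, map_sum]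
    rw [h1, Finset.sum_mul]
    refine Finset.sum_le_sum fun k _ => ?_
    have h2 : r k * T ≤ ∑ j, RCLike.re (⟪x j, e k⟫_𝕜) := by
      rw [hT, Finset.mul_sum]
      exact Finset.sum_le_sum fun j _ => h j k
    calc r k ^ 2 * T = r k * (r k * T) := by ring
      _ ≤ r k * ∑ j, RCLike.re (⟪x j, e k⟫_𝕜) := mul_le_mul_of_nonneg_left h2 (hr k)
  constructor
  · intro heq
    have hSn2 : ‖S‖ ^ 2 = (∑ k, r k ^ 2) * T ^ 2 := by
      rw [← heq, mul_pow, Real.sq_sqrt hR0]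
    have key : ‖S - (T : 𝕜) • v‖ ^ 2 ≤ 0 := by
      rw [@norm_sub_sq 𝕜, inner_smul_right, RCLike.re_ofReal_mul, norm_smul,
        RCLike.norm_ofReal, abs_of_nonneg hT0, mul_pow]
      nlinarith [hSv, hT0, hvsq, hSn2]
    have h0 : S - (T : 𝕜) • v = 0 := by
      have := norm_nonneg (S - (T : 𝕜) • v)
      have hn : ‖S - (T : 𝕜) • v‖ = 0 := by nlinarith
      exact norm_eq_zero.mp hn
    exact sub_eq_zero.mp h0
  · intro heq
    rw [heq, norm_smul, RCLike.norm_ofReal, abs_of_nonneg hT0, hvn, mul_comm]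
end

section
/- Let (H, ⟨·,·⟩) be a complex inner product space, let e₁, …, eₘ be orthonormal vectors in H, and let r₁, …, rₘ ≥ 0 and ρ₁, …, ρₘ ≥ 0. If the vectors x₁, …, xₙ ∈ H satisfy 0 ≤ rₖ‖xⱼ‖ ≤ Re⟨xⱼ, eₖ⟩ and 0 ≤ ρₖ‖xⱼ‖ ≤ Im⟨xⱼ, eₖ⟩ for all j ∈ {1, …, n} and k ∈ {1, …, m}, then [Σₖ₌₁ᵐ (rₖ² + ρₖ²)]^{1/2} · Σⱼ₌₁ⁿ ‖xⱼ‖ ≤ ‖Σⱼ₌₁ⁿ xⱼ‖. -/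
set_option maxHeartbeats 1000000


open scoped InnerProductSpace

theorem stmt_11 {H : Type*} [NormedAddCommGroup H] [InnerProductSpace ℂ H]
    (m : ℕ) (e : Fin m → H) (he : Orthonormal ℂ e)
    (r ρ : Fin m → ℝ) (hr : ∀ k, 0 ≤ r k) (hρ : ∀ k, 0 ≤ ρ k)
    (n : ℕ) (x : Fin n → H)
    (h1 : ∀ j k, r k * ‖x j‖ ≤ (⟪x j, e k⟫_ℂ).re)
    (h2 : ∀ j k, ρ k * ‖x j‖ ≤ (⟪x j, e k⟫_ℂ).im) :
    Real.sqrt (∑ k, (r k ^ 2 + ρ k ^ 2)) * ∑ j, ‖x j‖ ≤ ‖∑ j, x j‖ := by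
  set S := ∑ j, x j with hS
  set T := ∑ j, ‖x j‖ with hT
  have hT0 : 0 ≤ T := Finset.sum_nonneg fun j _ => norm_nonneg _
  have hinner : ∀ k, ⟪S, e k⟫_ℂ = ∑ j, ⟪x j, e k⟫_ℂ := fun k => sum_inner _ _ _
  have hre : ∀ k, r k * T ≤ (⟪S, e k⟫_ℂ).re := by
    intro k
    rw [hinner, Complex.re_sum, hT, Finset.mul_sum]
    exact Finset.sum_le_sum fun j _ => h1 j k
  have him : ∀ k, ρ k * T ≤ (⟪S, e k⟫_ℂ).im := by
    intro k
    rw [hinner, Complex.im_sum, hT, Finset.mul_sum]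
    exact Finset.sum_le_sum fun j _ => h2 j k
  have key : (∑ k, (r k ^ 2 + ρ k ^ 2)) * T ^ 2 ≤ ‖S‖ ^ 2 := by
    calc (∑ k, (r k ^ 2 + ρ k ^ 2)) * T ^ 2
        = ∑ k, ((r k * T) ^ 2 + (ρ k * T) ^ 2) := by
          rw [Finset.sum_mul]; exact Finset.sum_congr rfl fun k _ => by ring
      _ ≤ ∑ k, ‖⟪e k, S⟫_ℂ‖ ^ 2 := by
          refine Finset.sum_le_sum fun k _ => ?_
          have h1' := hre k
          have h2' := him k
          have hn1 : 0 ≤ r k * T := mul_nonneg (hr k) hT0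
          have hn2 : 0 ≤ ρ k * T := mul_nonneg (hρ k) hT0
          have hsym : ‖⟪e k, S⟫_ℂ‖ = ‖⟪S, e k⟫_ℂ‖ := norm_inner_symm _ _
          rw [hsym, Complex.sq_norm, Complex.normSq_apply]
          have e1 : (r k * T) ^ 2 ≤ (⟪S, e k⟫_ℂ).re ^ 2 := by
            exact pow_le_pow_left₀ hn1 h1' 2
          have e2 : (ρ k * T) ^ 2 ≤ (⟪S, e k⟫_ℂ).im ^ 2 := by
            exact pow_le_pow_left₀ hn2 h2' 2
          nlinarith
      _ ≤ ‖S‖ ^ 2 := he.sum_inner_products_le S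
  have := Real.sqrt_le_sqrt key
  rwa [Real.sqrt_mul (Finset.sum_nonneg fun k _ => by positivity),
    Real.sqrt_sq hT0, Real.sqrt_sq (norm_nonneg _)] at this
end

section
/- Let (H, ⟨·,·⟩) be a complex inner product space, let e₁, …, eₘ be orthonormal vectors in H, and let ρ₁, …, ρₘ ∈ (0, 1) and η₁, …, ηₘ ∈ (0, 1). If the vectors x₁, …, xₙ ∈ H satisfy ‖xⱼ − eₖ‖ ≤ ρₖ and ‖xⱼ − i eₖ‖ ≤ ηₖ for all j ∈ {1, …, n} and k ∈ {1, …, m}, then [Σₖ₌₁ᵐ (2 − ρₖ² − ηₖ²)]^{1/2} · Σⱼ₌₁ⁿ ‖xⱼ‖ ≤ ‖Σⱼ₌₁ⁿ xⱼ‖. -/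
open scoped InnerProductSpace

theorem stmt_13 {H : Type*} [NormedAddCommGroup H] [InnerProductSpace ℂ H]
    (m : ℕ) (e : Fin m → H) (he : Orthonormal ℂ e)
    (ρ η : Fin m → ℝ)
    (hρ : ∀ k, ρ k ∈ Set.Ioo (0 : ℝ) 1) (hη : ∀ k, η k ∈ Set.Ioo (0 : ℝ) 1)
    (n : ℕ) (x : Fin n → H)
    (h1 : ∀ j k, ‖x j - e k‖ ≤ ρ k)
    (h2 : ∀ j k, ‖x j - Complex.I • e k‖ ≤ η k) :
    Real.sqrt (∑ k, (2 - ρ k ^ 2 - η k ^ 2)) * ∑ j, ‖x j‖ ≤ ‖∑ j, x j‖ := by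
  set S : ℝ := ∑ j, ‖x j‖ with hS
  set s : H := ∑ j, x j with hs
  have hSnn : 0 ≤ S := Finset.sum_nonneg fun j _ => norm_nonneg _
  have hek : ∀ k, ‖e k‖ = 1 := fun k => he.1 k
  -- Real part bound
  have hre : ∀ j k, Real.sqrt (1 - ρ k ^ 2) * ‖x j‖ ≤ (⟪e k, x j⟫_ℂ).re := by
    intro j k
    have hρk := hρ k
    have h1' : ‖x j - e k‖ ^ 2 ≤ ρ k ^ 2 :=
      pow_le_pow_left₀ (norm_nonneg _) (h1 j k) 2
    have hexp : ‖x j - e k‖ ^ 2 = ‖x j‖ ^ 2 - 2 * (⟪x j, e k⟫_ℂ).re + 1 := by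
      rw [@norm_sub_sq ℂ, hek k]; ring_nf; rfl
    have hkey : ‖x j‖ ^ 2 + (1 - ρ k ^ 2) ≤ 2 * (⟪x j, e k⟫_ℂ).re := by
      nlinarith [hexp, h1']
    have hb : Real.sqrt (1 - ρ k ^ 2) ^ 2 = 1 - ρ k ^ 2 := by
      rw [Real.sq_sqrt]; nlinarith [hρk.1, hρk.2]
    have hamgm : 2 * (Real.sqrt (1 - ρ k ^ 2) * ‖x j‖) ≤ ‖x j‖ ^ 2 + (1 - ρ k ^ 2) := by
      nlinarith [sq_nonneg (‖x j‖ - Real.sqrt (1 - ρ k ^ 2)), hb]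
    have : (⟪x j, e k⟫_ℂ).re = (⟪e k, x j⟫_ℂ).re := by
      simpa using inner_re_symm (𝕜 := ℂ) (x j) (e k)
    linarith [this]
  -- Imaginary part bound
  have him : ∀ j k, Real.sqrt (1 - η k ^ 2) * ‖x j‖ ≤ (⟪e k, x j⟫_ℂ).im := by
    intro j k
    have hηk := hη k
    have h2' : ‖x j - Complex.I • e k‖ ^ 2 ≤ η k ^ 2 :=
      pow_le_pow_left₀ (norm_nonneg _) (h2 j k) 2
    have hnI : ‖Complex.I • e k‖ = 1 := by
      rw [norm_smul, Complex.norm_I, hek k, one_mul]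
    have hinner : (⟪x j, Complex.I • e k⟫_ℂ).re = -(⟪x j, e k⟫_ℂ).im := by
      rw [inner_smul_right]
      simp [Complex.mul_re]
    have hexp : ‖x j - Complex.I • e k‖ ^ 2
        = ‖x j‖ ^ 2 + 2 * (⟪x j, e k⟫_ℂ).im + 1 := by
      rw [@norm_sub_sq ℂ, hnI]
      simp only [RCLike.re_to_complex]
      rw [hinner]; ring
    have hkey : ‖x j‖ ^ 2 + (1 - η k ^ 2) ≤ 2 * (-(⟪x j, e k⟫_ℂ).im) := by
      nlinarith [hexp, h2']
    have hb : Real.sqrt (1 - η k ^ 2) ^ 2 = 1 - η k ^ 2 := by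
      rw [Real.sq_sqrt]; nlinarith [hηk.1, hηk.2]
    have hamgm : 2 * (Real.sqrt (1 - η k ^ 2) * ‖x j‖) ≤ ‖x j‖ ^ 2 + (1 - η k ^ 2) := by
      nlinarith [sq_nonneg (‖x j‖ - Real.sqrt (1 - η k ^ 2)), hb]
    have : (⟪e k, x j⟫_ℂ).im = -(⟪x j, e k⟫_ℂ).im := by
      simpa using inner_im_symm (𝕜 := ℂ) (e k) (x j)
    linarith [this]
  -- per-k bound on |⟪e k, s⟫|²
  have hk : ∀ k, (2 - ρ k ^ 2 - η k ^ 2) * S ^ 2 ≤ ‖⟪e k, s⟫_ℂ‖ ^ 2 := by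
    intro k
    have hres : Real.sqrt (1 - ρ k ^ 2) * S ≤ (⟪e k, s⟫_ℂ).re := by
      have : (⟪e k, s⟫_ℂ).re = ∑ j, (⟪e k, x j⟫_ℂ).re := by
        rw [hs, inner_sum]; exact Complex.re_sum _ _
      rw [this, hS, Finset.mul_sum]
      exact Finset.sum_le_sum fun j _ => hre j k
    have hims : Real.sqrt (1 - η k ^ 2) * S ≤ (⟪e k, s⟫_ℂ).im := by
      have : (⟪e k, s⟫_ℂ).im = ∑ j, (⟪e k, x j⟫_ℂ).im := by
        rw [hs, inner_sum]; exact Complex.im_sum _ _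
      rw [this, hS, Finset.mul_sum]
      exact Finset.sum_le_sum fun j _ => him j k
    have hnormsq : ‖⟪e k, s⟫_ℂ‖ ^ 2 = (⟪e k, s⟫_ℂ).re ^ 2 + (⟪e k, s⟫_ℂ).im ^ 2 := by
      rw [Complex.sq_norm, Complex.normSq_apply]; ring
    have hb1 : Real.sqrt (1 - ρ k ^ 2) ^ 2 = 1 - ρ k ^ 2 := by
      rw [Real.sq_sqrt]; nlinarith [(hρ k).1, (hρ k).2]
    have hb2 : Real.sqrt (1 - η k ^ 2) ^ 2 = 1 - η k ^ 2 := by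
      rw [Real.sq_sqrt]; nlinarith [(hη k).1, (hη k).2]
    have hr0 : 0 ≤ Real.sqrt (1 - ρ k ^ 2) * S := mul_nonneg (Real.sqrt_nonneg _) hSnn
    have hi0 : 0 ≤ Real.sqrt (1 - η k ^ 2) * S := mul_nonneg (Real.sqrt_nonneg _) hSnn
    have h1sq : (Real.sqrt (1 - ρ k ^ 2) * S) ^ 2 ≤ (⟪e k, s⟫_ℂ).re ^ 2 :=
      pow_le_pow_left₀ hr0 hres 2
    have h2sq : (Real.sqrt (1 - η k ^ 2) * S) ^ 2 ≤ (⟪e k, s⟫_ℂ).im ^ 2 :=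
      pow_le_pow_left₀ hi0 hims 2
    nlinarith [h1sq, h2sq, hb1, hb2]
  -- Bessel
  have hbessel : ∑ k, ‖⟪e k, s⟫_ℂ‖ ^ 2 ≤ ‖s‖ ^ 2 := he.sum_inner_products_le s
  have hmain : (∑ k, (2 - ρ k ^ 2 - η k ^ 2)) * S ^ 2 ≤ ‖s‖ ^ 2 := by
    calc (∑ k, (2 - ρ k ^ 2 - η k ^ 2)) * S ^ 2
        = ∑ k, (2 - ρ k ^ 2 - η k ^ 2) * S ^ 2 := by rw [Finset.sum_mul]
      _ ≤ ∑ k, ‖⟪e k, s⟫_ℂ‖ ^ 2 := Finset.sum_le_sum fun k _ => hk k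
      _ ≤ ‖s‖ ^ 2 := hbessel
  have : Real.sqrt (∑ k, (2 - ρ k ^ 2 - η k ^ 2)) * S
      = Real.sqrt ((∑ k, (2 - ρ k ^ 2 - η k ^ 2)) * S ^ 2) := by
    rw [Real.sqrt_mul' _ (by positivity : (0:ℝ) ≤ S ^ 2), Real.sqrt_sq hSnn]
  rw [this]
  calc Real.sqrt ((∑ k, (2 - ρ k ^ 2 - η k ^ 2)) * S ^ 2)
      ≤ Real.sqrt (‖s‖ ^ 2) := Real.sqrt_le_sqrt hmain
    _ = ‖s‖ := Real.sqrt_sq (norm_nonneg _)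
end

section
/- Let (H, ⟨·,·⟩) be a complex inner product space, let e₁, …, eₘ be orthonormal vectors in H, and let ρ₁, …, ρₘ ∈ (0, 1) and η₁, …, ηₘ ∈ (0, 1). Suppose the vectors x₁, …, xₙ ∈ H satisfy ‖xⱼ − eₖ‖ ≤ ρₖ and ‖xⱼ − i eₖ‖ ≤ ηₖ for all j ∈ {1, …, n} and k ∈ {1, …, m}. Then equality holds in the inequality [Σₖ₌₁ᵐ (2 − ρₖ² − ηₖ²)]^{1/2} · Σⱼ₌₁ⁿ ‖xⱼ‖ ≤ ‖Σⱼ₌₁ⁿ xⱼ‖ if and only if Σⱼ₌₁ⁿ xⱼ = (Σⱼ₌₁ⁿ ‖xⱼ‖) · Σₖ₌₁ᵐ (√(1 − ρₖ²) + i√(1 − ηₖ²)) eₖ. -/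
open scoped InnerProductSpace

theorem stmt_14 {H : Type*} [NormedAddCommGroup H] [InnerProductSpace ℂ H]
    (m : ℕ) (e : Fin m → H) (he : Orthonormal ℂ e)
    (ρ η : Fin m → ℝ)
    (hρ : ∀ k, ρ k ∈ Set.Ioo (0 : ℝ) 1) (hη : ∀ k, η k ∈ Set.Ioo (0 : ℝ) 1)
    (n : ℕ) (x : Fin n → H)
    (h1 : ∀ j k, ‖x j - e k‖ ≤ ρ k)
    (h2 : ∀ j k, ‖x j - Complex.I • e k‖ ≤ η k) :
    Real.sqrt (∑ k, (2 - ρ k ^ 2 - η k ^ 2)) * ∑ j, ‖x j‖ = ‖∑ j, x j‖ ↔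
      ∑ j, x j = (∑ j, ‖x j‖) •
        ∑ k, ((Real.sqrt (1 - ρ k ^ 2) : ℂ) + Complex.I * (Real.sqrt (1 - η k ^ 2) : ℂ)) • e k := by
  set a : Fin m → ℝ := fun k => Real.sqrt (1 - ρ k ^ 2) with ha_def
  set b : Fin m → ℝ := fun k => Real.sqrt (1 - η k ^ 2) with hb_def
  set c : Fin m → ℂ := fun k => (a k : ℂ) + Complex.I * (b k : ℂ) with hc_def
  set w : H := ∑ k, c k • e k with hw_def
  set S : ℝ := ∑ k, (2 - ρ k ^ 2 - η k ^ 2) with hS_def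
  set T : ℝ := ∑ j, ‖x j‖ with hT_def
  have ha0 : ∀ k, 0 ≤ a k := fun k => Real.sqrt_nonneg _
  have hb0 : ∀ k, 0 ≤ b k := fun k => Real.sqrt_nonneg _
  have ha2 : ∀ k, a k ^ 2 = 1 - ρ k ^ 2 := fun k =>
    Real.sq_sqrt (by nlinarith [(hρ k).1, (hρ k).2])
  have hb2 : ∀ k, b k ^ 2 = 1 - η k ^ 2 := fun k =>
    Real.sq_sqrt (by nlinarith [(hη k).1, (hη k).2])
  have hT0 : 0 ≤ T := Finset.sum_nonneg fun j _ => norm_nonneg _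
  have hSsum : S = ∑ k, (a k ^ 2 + b k ^ 2) := by
    rw [hS_def]; exact Finset.sum_congr rfl fun k _ => by rw [ha2, hb2]; ring
  have hS0 : 0 ≤ S := by
    rw [hSsum]; exact Finset.sum_nonneg fun k _ => by positivity
  -- norm of w
  have hw2 : ‖w‖ ^ 2 = S := by
    have h := he.inner_sum c c Finset.univ
    have hre : (RCLike.re ⟪w, w⟫_ℂ : ℝ) = ‖w‖ ^ 2 := by
      rw [← @inner_self_eq_norm_sq ℂ]
    rw [← hre, h, map_sum, hSsum]
    refine Finset.sum_congr rfl fun k _ => ?_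
    simp only [hc_def, map_add, map_mul, Complex.conj_I, Complex.conj_ofReal,
      RCLike.re_to_complex, Complex.add_re, Complex.mul_re, Complex.add_im,
      Complex.mul_im, Complex.ofReal_re, Complex.ofReal_im, Complex.I_re,
      Complex.I_im, Complex.neg_re, Complex.neg_im]
    ring
  have hwn : ‖w‖ = Real.sqrt S := by
    rw [← hw2, Real.sqrt_sq (norm_nonneg _)]
  -- lower bound on re inner
  have key : ∀ j, S * ‖x j‖ ≤ Complex.re ⟪w, x j⟫_ℂ := by
    intro j
    have hinner : ⟪w, x j⟫_ℂ = ∑ k, (starRingEnd ℂ) (c k) * ⟪e k, x j⟫_ℂ := by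
      rw [hw_def, sum_inner]
      exact Finset.sum_congr rfl fun k _ => inner_smul_left _ _ _
    have hre : Complex.re ⟪w, x j⟫_ℂ =
        ∑ k, (a k * Complex.re ⟪e k, x j⟫_ℂ + b k * Complex.im ⟪e k, x j⟫_ℂ) := by
      rw [hinner, Complex.re_sum]
      refine Finset.sum_congr rfl fun k _ => ?_
      simp only [hc_def, map_add, map_mul, Complex.conj_I, Complex.conj_ofReal,
        Complex.add_re, Complex.mul_re, Complex.add_im, Complex.mul_im,
        Complex.ofReal_re, Complex.ofReal_im, Complex.I_re, Complex.I_im,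
        Complex.neg_re, Complex.neg_im]
      ring
    rw [hre, hS_def, Finset.sum_mul]
    refine Finset.sum_le_sum fun k _ => ?_
    have hek : ‖e k‖ = 1 := he.1 k
    have hr1 : (‖x j‖ ^ 2 + 1 - ρ k ^ 2) / 2 ≤ Complex.re ⟪e k, x j⟫_ℂ := by
      have h := h1 j k
      have hsq : ‖x j - e k‖ ^ 2 ≤ ρ k ^ 2 := by
        have := (hρ k).1
        nlinarith [norm_nonneg (x j - e k)]
      rw [@norm_sub_sq ℂ, hek] at hsq
      have hsymm : RCLike.re ⟪x j, e k⟫_ℂ = RCLike.re ⟪e k, x j⟫_ℂ := inner_re_symm _ _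
      simp only [RCLike.re_to_complex] at hsq hsymm
      rw [hsymm] at hsq
      linarith
    have hr2 : (‖x j‖ ^ 2 + 1 - η k ^ 2) / 2 ≤ Complex.im ⟪e k, x j⟫_ℂ := by
      have h := h2 j k
      have hsq : ‖x j - Complex.I • e k‖ ^ 2 ≤ η k ^ 2 := by
        have := (hη k).1
        nlinarith [norm_nonneg (x j - Complex.I • e k)]
      rw [@norm_sub_sq ℂ] at hsq
      have hIe : ⟪x j, Complex.I • e k⟫_ℂ = Complex.I * ⟪x j, e k⟫_ℂ := inner_smul_right _ _ _
      have hnIe : ‖Complex.I • e k‖ = 1 := by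
        rw [norm_smul, Complex.norm_I, hek, one_mul]
      rw [hIe, hnIe] at hsq
      have him : Complex.re (Complex.I * ⟪x j, e k⟫_ℂ) = - Complex.im ⟪x j, e k⟫_ℂ := by
        simp [Complex.mul_re]
      have hconj : (⟪e k, x j⟫_ℂ) = (starRingEnd ℂ) ⟪x j, e k⟫_ℂ := (inner_conj_symm _ _).symm
      have him2 : Complex.im ⟪e k, x j⟫_ℂ = - Complex.im ⟪x j, e k⟫_ℂ := by
        rw [hconj, Complex.conj_im]
      simp only [RCLike.re_to_complex] at hsq
      rw [him] at hsq
      rw [him2]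
      linarith
    have hr1' : (‖x j‖ ^ 2 + a k ^ 2) / 2 ≤ Complex.re ⟪e k, x j⟫_ℂ := by
      rw [ha2]; linarith
    have hr2' : (‖x j‖ ^ 2 + b k ^ 2) / 2 ≤ Complex.im ⟪e k, x j⟫_ℂ := by
      rw [hb2]; linarith
    have hgoal : 2 - ρ k ^ 2 - η k ^ 2 = a k ^ 2 + b k ^ 2 := by
      rw [ha2, hb2]; ring
    rw [hgoal]
    nlinarith [mul_nonneg (ha0 k) (sq_nonneg (‖x j‖ - a k)),
      mul_nonneg (hb0 k) (sq_nonneg (‖x j‖ - b k)),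
      mul_le_mul_of_nonneg_left hr1' (ha0 k), mul_le_mul_of_nonneg_left hr2' (hb0 k)]
  have keysum : S * T ≤ Complex.re ⟪w, ∑ j, x j⟫_ℂ := by
    rw [inner_sum, Complex.re_sum, hT_def, Finset.mul_sum]
    exact Finset.sum_le_sum fun j _ => key j
  constructor
  · intro h
    rcases eq_or_lt_of_le hS0 with hSeq | hSpos
    · -- S = 0 : w = 0 and ∑ x = 0
      have hw0 : w = 0 := by
        have : ‖w‖ = 0 := by rw [hwn, ← hSeq, Real.sqrt_zero]
        exact norm_eq_zero.mp this
      have hx0 : ∑ j, x j = 0 := by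
        have : ‖∑ j, x j‖ = 0 := by
          rw [← h, ← hSeq, Real.sqrt_zero, zero_mul]
        exact norm_eq_zero.mp this
      rw [hx0, hw0, smul_zero]
    · have hub : Complex.re ⟪w, ∑ j, x j⟫_ℂ ≤ ‖w‖ * ‖∑ j, x j‖ := by
        have := re_inner_le_norm (𝕜 := ℂ) w (∑ j, x j)
        simpa only [RCLike.re_to_complex] using this
      have heqn : ‖w‖ * ‖∑ j, x j‖ = S * T := by
        rw [hwn, ← h, ← mul_assoc, Real.mul_self_sqrt hS0]
      have hre_eq : Complex.re ⟪w, ∑ j, x j⟫_ℂ = ‖w‖ * ‖∑ j, x j‖ := by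
        rw [heqn]; linarith [keysum, heqn ▸ hub]
      -- deduce inner = norm * norm (complex)
      have habs : ‖⟪w, ∑ j, x j⟫_ℂ‖ ≤ ‖w‖ * ‖∑ j, x j‖ := by
        exact norm_inner_le_norm (𝕜 := ℂ) w (∑ j, x j)
      have hinner_eq : ⟪w, ∑ j, x j⟫_ℂ = (‖w‖ : ℂ) * (‖∑ j, x j‖ : ℂ) := by
        set z := ⟪w, ∑ j, x j⟫_ℂ with hz
        have h1' : ‖z‖ = z.re := by
          have := Complex.re_le_norm z
          linarith [hre_eq ▸ habs]
        have him0 : z.im = 0 := by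
          have h2' : ‖z‖ ^ 2 = z.re ^ 2 + z.im ^ 2 := by
            rw [Complex.sq_norm, Complex.normSq_apply]; ring
          rw [h1'] at h2'
          have : z.im ^ 2 = 0 := by linarith
          exact (pow_eq_zero_iff two_ne_zero).mp this
        have hzr : z = (z.re : ℂ) := Complex.ext rfl (by simp [him0])
        rw [hzr]
        have : z.re = ‖w‖ * ‖∑ j, x j‖ := hre_eq
        rw [this]; push_cast; ring
      have hcs := inner_eq_norm_mul_iff.mp hinner_eq
      -- hcs : (‖∑ x‖ : ℂ) • w = (‖w‖ : ℂ) • ∑ x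
      have hsqrtS : (0 : ℝ) < Real.sqrt S := Real.sqrt_pos.mpr hSpos
      have hsm : ((Real.sqrt S * T : ℝ) : ℂ) • w = ((Real.sqrt S : ℝ) : ℂ) • ∑ j, x j := by
        rw [h, ← hwn]; exact hcs
      have hne : ((Real.sqrt S : ℝ) : ℂ) ≠ 0 := by
        simpa using hsqrtS.ne'
      have hfin : ∑ j, x j = ((T : ℝ) : ℂ) • w := by
        calc ∑ j, x j = ((Real.sqrt S : ℝ) : ℂ)⁻¹ • (((Real.sqrt S : ℝ) : ℂ) • ∑ j, x j) := by
              rw [smul_smul, inv_mul_cancel₀ hne, one_smul]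
          _ = ((Real.sqrt S : ℝ) : ℂ)⁻¹ • (((Real.sqrt S * T : ℝ) : ℂ) • w) := by rw [hsm]
          _ = ((T : ℝ) : ℂ) • w := by
              rw [smul_smul]
              congr 1
              push_cast
              field_simp
      rw [hfin, Complex.coe_smul]
  · intro h
    rw [h, norm_smul, Real.norm_of_nonneg hT0, hwn]
    ring
end

section
/- Let (H, ⟨·,·⟩) be a complex inner product space, let e₁, …, eₘ be orthonormal vectors in H, and let Mₖ ≥ mₖ > 0 and Nₖ ≥ nₖ > 0 for each k ∈ {1, …, m}. If the vectors x₁, …, xₙ ∈ H satisfy Re⟨Mₖeₖ − xⱼ, xⱼ − mₖeₖ⟩ ≥ 0 and Re⟨Nₖieₖ − xⱼ, xⱼ − nₖieₖ⟩ ≥ 0 for all j ∈ {1, …, n} and k ∈ {1, …, m}, then 2·{Σₖ₌₁ᵐ [mₖMₖ/(Mₖ + mₖ)² + nₖNₖ/(Nₖ + nₖ)²]}^{1/2} · Σⱼ₌₁ⁿ ‖xⱼ‖ ≤ ‖Σⱼ₌₁ⁿ xⱼ‖. -/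
open scoped InnerProductSpace

private lemma unit_key {H : Type*} [NormedAddCommGroup H] [InnerProductSpace ℂ H]
    (u y : H) (a b : ℝ) (hu : ⟪u, u⟫_ℂ = 1) (ha : 0 < a) (hab : a ≤ b)
    (h : 0 ≤ (⟪b • u - y, y - a • u⟫_ℂ).re) :
    2 * Real.sqrt (a * b) * ‖y‖ ≤ (b + a) * (⟪u, y⟫_ℂ).re := by
  have hsl : ∀ (r : ℝ) (w v : H), ⟪r • w, v⟫_ℂ = (r : ℂ) * ⟪w, v⟫_ℂ := by
    intro r w v
    rw [← algebraMap_smul ℂ r w, inner_smul_left]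
    simp [Complex.conj_ofReal]
  have hsr : ∀ (r : ℝ) (w v : H), ⟪w, r • v⟫_ℂ = (r : ℂ) * ⟪w, v⟫_ℂ := by
    intro r w v
    rw [← algebraMap_smul ℂ r v, inner_smul_right]
    simp
  have hyx : ⟪y, u⟫_ℂ = starRingEnd ℂ ⟪u, y⟫_ℂ := (inner_conj_symm y u).symm
  have hexp : (⟪b • u - y, y - a • u⟫_ℂ).re
      = (b + a) * (⟪u, y⟫_ℂ).re - a * b - ‖y‖ ^ 2 := by
    rw [inner_sub_left, inner_sub_right, inner_sub_right, hsl, hsl, hsr, hsr, hu,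
      hyx]
    have hyy : (⟪y, y⟫_ℂ).re = ‖y‖ ^ 2 := by
      have := inner_self_eq_norm_sq (𝕜 := ℂ) y
      simpa using this
    have hre : (⟪y, u⟫_ℂ).re = (⟪u, y⟫_ℂ).re := by rw [hyx, Complex.conj_re]
    simp only [Complex.mul_re, Complex.sub_re, Complex.add_re, Complex.ofReal_re,
      Complex.ofReal_im, Complex.conj_re, Complex.conj_im, Complex.one_re, Complex.one_im,
      Complex.mul_im, ← Complex.ofReal_pow]
    rw [hyy]
    ring
  rw [hexp] at h
  have hr2 : Real.sqrt (a * b) ^ 2 = a * b :=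
    Real.sq_sqrt (le_of_lt (mul_pos ha (ha.trans_le hab)))
  nlinarith [sq_nonneg (‖y‖ - Real.sqrt (a * b)), Real.sqrt_nonneg (a * b), norm_nonneg y]

theorem stmt_15 {H : Type*} [NormedAddCommGroup H] [InnerProductSpace ℂ H]
    (m : ℕ) (e : Fin m → H) (he : Orthonormal ℂ e)
    (mm MM nn NN : Fin m → ℝ)
    (hm : ∀ k, 0 < mm k) (hM : ∀ k, mm k ≤ MM k)
    (hn : ∀ k, 0 < nn k) (hN : ∀ k, nn k ≤ NN k)
    (n : ℕ) (x : Fin n → H)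
    (h1 : ∀ j k, 0 ≤ (⟪MM k • e k - x j, x j - mm k • e k⟫_ℂ).re)
    (h2 : ∀ j k, 0 ≤ (⟪NN k • (Complex.I • e k) - x j, x j - nn k • (Complex.I • e k)⟫_ℂ).re) :
    2 * Real.sqrt (∑ k, (mm k * MM k / (MM k + mm k) ^ 2 + nn k * NN k / (NN k + nn k) ^ 2)) *
        ∑ j, ‖x j‖ ≤ ‖∑ j, x j‖ := by
  set S := ∑ j, ‖x j‖ with hSdef
  set s := ∑ j, x j with hsdef
  have hS0 : 0 ≤ S := Finset.sum_nonneg fun j _ => norm_nonneg _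
  have hee : ∀ k, ⟪e k, e k⟫_ℂ = 1 := by
    intro k
    rw [inner_self_eq_norm_sq_to_K, he.1 k]
    norm_num
  have hff : ∀ k, ⟪Complex.I • e k, Complex.I • e k⟫_ℂ = 1 := by
    intro k
    rw [inner_smul_left, inner_smul_right, hee k]
    simp [Complex.conj_I]
  -- pointwise bounds
  have key1 : ∀ j k, 2 * Real.sqrt (mm k * MM k) * ‖x j‖ ≤ (MM k + mm k) * (⟪e k, x j⟫_ℂ).re :=
    fun j k => unit_key (e k) (x j) (mm k) (MM k) (hee k) (hm k) (hM k) (h1 j k)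
  have key2 : ∀ j k, 2 * Real.sqrt (nn k * NN k) * ‖x j‖
      ≤ (NN k + nn k) * (⟪Complex.I • e k, x j⟫_ℂ).re :=
    fun j k => unit_key (Complex.I • e k) (x j) (nn k) (NN k) (hff k) (hn k) (hN k) (h2 j k)
  -- imaginary part identification
  have him : ∀ k (y : H), (⟪Complex.I • e k, y⟫_ℂ).re = (⟪e k, y⟫_ℂ).im := by
    intro k y
    rw [inner_smul_left]
    simp [Complex.conj_I]
  -- summed bounds
  have hsum1 : ∀ k, 2 * Real.sqrt (mm k * MM k) * S ≤ (MM k + mm k) * (⟪e k, s⟫_ℂ).re := by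
    intro k
    calc 2 * Real.sqrt (mm k * MM k) * S = ∑ j, 2 * Real.sqrt (mm k * MM k) * ‖x j‖ := by
          rw [hSdef, Finset.mul_sum]
      _ ≤ ∑ j, (MM k + mm k) * (⟪e k, x j⟫_ℂ).re :=
          Finset.sum_le_sum fun j _ => key1 j k
      _ = (MM k + mm k) * (⟪e k, s⟫_ℂ).re := by
          rw [hsdef, inner_sum, Complex.re_sum, Finset.mul_sum]
  have hsum2 : ∀ k, 2 * Real.sqrt (nn k * NN k) * S ≤ (NN k + nn k) * (⟪e k, s⟫_ℂ).im := by
    intro k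
    calc 2 * Real.sqrt (nn k * NN k) * S = ∑ j, 2 * Real.sqrt (nn k * NN k) * ‖x j‖ := by
          rw [hSdef, Finset.mul_sum]
      _ ≤ ∑ j, (NN k + nn k) * (⟪e k, x j⟫_ℂ).im :=
          Finset.sum_le_sum fun j _ => (him k (x j)) ▸ key2 j k
      _ = (NN k + nn k) * (⟪e k, s⟫_ℂ).im := by
          rw [hsdef, inner_sum, Complex.im_sum, Finset.mul_sum]
  -- per k squared bound
  have keysq : ∀ k, 4 * (mm k * MM k / (MM k + mm k) ^ 2 + nn k * NN k / (NN k + nn k) ^ 2) * S ^ 2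
      ≤ ‖⟪e k, s⟫_ℂ‖ ^ 2 := by
    intro k
    have hMm : 0 < MM k + mm k := by linarith [hm k, hM k]
    have hNn : 0 < NN k + nn k := by linarith [hn k, hN k]
    have hr1 : Real.sqrt (mm k * MM k) ^ 2 = mm k * MM k :=
      Real.sq_sqrt (by nlinarith [hm k, hM k])
    have hr2 : Real.sqrt (nn k * NN k) ^ 2 = nn k * NN k :=
      Real.sq_sqrt (by nlinarith [hn k, hN k])
    have hA0 : 0 ≤ (⟪e k, s⟫_ℂ).re := by
      have h := hsum1 k
      have h2' : 0 ≤ 2 * Real.sqrt (mm k * MM k) * S := by positivity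
      nlinarith
    have hB0 : 0 ≤ (⟪e k, s⟫_ℂ).im := by
      have h := hsum2 k
      have h2' : 0 ≤ 2 * Real.sqrt (nn k * NN k) * S := by positivity
      nlinarith
    have hnorm : ‖⟪e k, s⟫_ℂ‖ ^ 2 = (⟪e k, s⟫_ℂ).re ^ 2 + (⟪e k, s⟫_ℂ).im ^ 2 := by
      rw [Complex.sq_norm, Complex.normSq_apply]; ring
    rw [hnorm]
    have hA : 4 * (mm k * MM k) * S ^ 2 ≤ (MM k + mm k) ^ 2 * (⟪e k, s⟫_ℂ).re ^ 2 := by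
      have h := hsum1 k
      nlinarith [mul_self_le_mul_self (mul_nonneg (mul_nonneg (by norm_num : (0:ℝ) ≤ 2) (Real.sqrt_nonneg (mm k * MM k))) hS0) h]
    have hB : 4 * (nn k * NN k) * S ^ 2 ≤ (NN k + nn k) ^ 2 * (⟪e k, s⟫_ℂ).im ^ 2 := by
      have h := hsum2 k
      nlinarith [mul_self_le_mul_self (mul_nonneg (mul_nonneg (by norm_num : (0:ℝ) ≤ 2) (Real.sqrt_nonneg (nn k * NN k))) hS0) h]
    have hA' : 4 * (mm k * MM k / (MM k + mm k) ^ 2) * S ^ 2 ≤ (⟪e k, s⟫_ℂ).re ^ 2 := by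
      rw [mul_div_assoc' , div_mul_eq_mul_div, div_le_iff₀ (by positivity)]
      nlinarith
    have hB' : 4 * (nn k * NN k / (NN k + nn k) ^ 2) * S ^ 2 ≤ (⟪e k, s⟫_ℂ).im ^ 2 := by
      rw [mul_div_assoc', div_mul_eq_mul_div, div_le_iff₀ (by positivity)]
      nlinarith
    linarith
  -- Bessel
  have bessel : ∑ k, ‖⟪e k, s⟫_ℂ‖ ^ 2 ≤ ‖s‖ ^ 2 := he.sum_inner_products_le s
  set Sg := ∑ k, (mm k * MM k / (MM k + mm k) ^ 2 + nn k * NN k / (NN k + nn k) ^ 2) with hSgdef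
  have hSg0 : 0 ≤ Sg := Finset.sum_nonneg fun k _ =>
    add_nonneg (div_nonneg (by nlinarith [hm k, hM k]) (sq_nonneg _))
      (div_nonneg (by nlinarith [hn k, hN k]) (sq_nonneg _))
  have hsq : (2 * Real.sqrt Sg * S) ^ 2 ≤ ‖s‖ ^ 2 := by
    have hsum : 4 * Sg * S ^ 2 ≤ ∑ k, ‖⟪e k, s⟫_ℂ‖ ^ 2 := by
      rw [hSgdef, Finset.mul_sum, Finset.sum_mul]
      refine (le_of_eq ?_).trans (Finset.sum_le_sum fun k _ => keysq k)
      exact Finset.sum_congr rfl fun k _ => by ring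
    have : (2 * Real.sqrt Sg * S) ^ 2 = 4 * Sg * S ^ 2 := by
      rw [mul_pow, mul_pow, Real.sq_sqrt hSg0]; ring
    linarith
  have hL0 : 0 ≤ 2 * Real.sqrt Sg * S := by positivity
  have := Real.sqrt_le_sqrt hsq
  rwa [Real.sqrt_sq hL0, Real.sqrt_sq (norm_nonneg _)] at this
end

section
/- Let (H, ⟨·,·⟩) be a complex inner product space, let e₁, …, eₘ be orthonormal vectors in H, and let Mₖ ≥ mₖ > 0 and Nₖ ≥ nₖ > 0 for each k ∈ {1, …, m}. Suppose the vectors x₁, …, xₙ ∈ H satisfy Re⟨Mₖeₖ − xⱼ, xⱼ − mₖeₖ⟩ ≥ 0 and Re⟨Nₖieₖ − xⱼ, xⱼ − nₖieₖ⟩ ≥ 0 for all j ∈ {1, …, n} and k ∈ {1, …, m}. Then equality holds in the inequality 2·{Σₖ₌₁ᵐ [mₖMₖ/(Mₖ + mₖ)² + nₖNₖ/(Nₖ + nₖ)²]}^{1/2} · Σⱼ₌₁ⁿ ‖xⱼ‖ ≤ ‖Σⱼ₌₁ⁿ xⱼ‖ if and only if Σⱼ₌₁ⁿ xⱼ = 2(Σⱼ₌₁ⁿ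 ‖xⱼ‖) · Σₖ₌₁ᵐ (√(mₖMₖ)/(Mₖ + mₖ) + i√(nₖNₖ)/(Nₖ + nₖ)) eₖ. -/
open scoped InnerProductSpace

set_option maxHeartbeats 1000000 in
theorem stmt_16 {H : Type*} [NormedAddCommGroup H] [InnerProductSpace ℂ H]
    (m : ℕ) (e : Fin m → H) (he : Orthonormal ℂ e)
    (mm MM nn NN : Fin m → ℝ)
    (hm : ∀ k, 0 < mm k) (hM : ∀ k, mm k ≤ MM k)
    (hn : ∀ k, 0 < nn k) (hN : ∀ k, nn k ≤ NN k)
    (n : ℕ) (x : Fin n → H)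
    (h1 : ∀ j k, 0 ≤ (⟪MM k • e k - x j, x j - mm k • e k⟫_ℂ).re)
    (h2 : ∀ j k, 0 ≤ (⟪NN k • (Complex.I • e k) - x j, x j - nn k • (Complex.I • e k)⟫_ℂ).re) :
    2 * Real.sqrt (∑ k, (mm k * MM k / (MM k + mm k) ^ 2 + nn k * NN k / (NN k + nn k) ^ 2)) *
        ∑ j, ‖x j‖ = ‖∑ j, x j‖ ↔
      ∑ j, x j = (2 : ℂ) • (∑ j, ‖x j‖) •
        ∑ k, ((Real.sqrt (mm k * MM k) / (MM k + mm k) : ℂ) +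
          Complex.I * (Real.sqrt (nn k * NN k) / (NN k + nn k) : ℂ)) • e k := by
  classical
  have hsm : ∀ (t : ℝ) (y : H), t • y = (t : ℂ) • y := fun t y => by
    rw [← algebraMap_smul ℂ t y, Complex.coe_algebraMap]
  rcases Nat.eq_zero_or_pos m with hm0 | hm0
  · subst hm0
    simp [eq_comm, norm_eq_zero]
  have hMk : ∀ k, 0 < MM k + mm k := fun k => by have := hm k; have := hM k; linarith
  have hNk : ∀ k, 0 < NN k + nn k := fun k => by have := hn k; have := hN k; linarith
  set r : Fin m → ℝ := fun k => Real.sqrt (mm k * MM k) / (MM k + mm k) with hrdef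
  set s : Fin m → ℝ := fun k => Real.sqrt (nn k * NN k) / (NN k + nn k) with hsdef
  have hr' : ∀ k, Real.sqrt (mm k * MM k) / (MM k + mm k) = r k := fun k => rfl
  have hs' : ∀ k, Real.sqrt (nn k * NN k) / (NN k + nn k) = s k := fun k => rfl
  have hrpos : ∀ k, 0 < r k := fun k =>
    div_pos (Real.sqrt_pos.2 (mul_pos (hm k) ((hm k).trans_le (hM k)))) (hMk k)
  have hspos : ∀ k, 0 < s k := fun k =>
    div_pos (Real.sqrt_pos.2 (mul_pos (hn k) ((hn k).trans_le (hN k)))) (hNk k)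
  have hT : (∑ k, (mm k * MM k / (MM k + mm k) ^ 2 + nn k * NN k / (NN k + nn k) ^ 2))
      = ∑ k, (r k ^ 2 + s k ^ 2) := by
    refine Finset.sum_congr rfl fun k _ => ?_
    rw [← hr', ← hs', div_pow, div_pow,
      Real.sq_sqrt (mul_pos (hm k) ((hm k).trans_le (hM k))).le,
      Real.sq_sqrt (mul_pos (hn k) ((hn k).trans_le (hN k))).le]
  rw [hT]
  set T : ℝ := ∑ k, (r k ^ 2 + s k ^ 2) with hTdef
  have hTpos : 0 < T := Finset.sum_pos
    (fun k _ => by have := hrpos k; have := hspos k; positivity)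
    (Finset.univ_nonempty_iff.2 ⟨⟨0, hm0⟩⟩)
  set S : ℝ := ∑ j, ‖x j‖ with hSdef
  have hSnn : 0 ≤ S := Finset.sum_nonneg fun j _ => norm_nonneg _
  set z : H := ∑ j, x j with hzdef
  set c : Fin m → ℂ := fun k => ((r k : ℂ) + Complex.I * (s k : ℂ)) with hcdef
  have hc' : ∀ k, ((Real.sqrt (mm k * MM k) / (MM k + mm k) : ℂ) +
      Complex.I * (Real.sqrt (nn k * NN k) / (NN k + nn k) : ℂ)) = c k := by
    intro k
    simp only [hcdef, hrdef, hsdef]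
    push_cast
    ring
  simp only [hc']
  set u : H := ∑ k, c k • e k with hudef
  -- norm of u
  have hun : ‖u‖ ^ 2 = T := by
    have h0 := he.inner_sum c c Finset.univ
    rw [← hudef] at h0
    have h2' : (⟪u, u⟫_ℂ).re = ∑ k, ((starRingEnd ℂ) (c k) * c k).re := by
      rw [h0, Complex.re_sum]
    have h3 : (⟪u, u⟫_ℂ).re = ‖u‖ ^ 2 := by
      simpa using inner_self_eq_norm_sq (𝕜 := ℂ) u
    rw [h3] at h2'
    rw [h2', hTdef]
    refine Finset.sum_congr rfl fun k _ => ?_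
    simp [hcdef, Complex.mul_re, Complex.mul_im]
    ring
  have huN : ‖u‖ = Real.sqrt T := by rw [← hun, Real.sqrt_sq (norm_nonneg u)]
  -- pointwise expansions
  have hee : ∀ k, ⟪e k, e k⟫_ℂ = 1 := fun k => by
    rw [inner_self_eq_norm_sq_to_K, he.1 k]; norm_num
  have hxx : ∀ j, (⟪x j, x j⟫_ℂ).re = ‖x j‖ ^ 2 := fun j => by
    simpa using inner_self_eq_norm_sq (𝕜 := ℂ) (x j)
  have key1 : ∀ j k, 2 * r k * ‖x j‖ ≤ (⟪e k, x j⟫_ℂ).re := by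
    intro j k
    have h := h1 j k
    have hex : (⟪MM k • e k - x j, x j - mm k • e k⟫_ℂ).re
        = (MM k + mm k) * (⟪e k, x j⟫_ℂ).re - mm k * MM k - ‖x j‖ ^ 2 := by
      rw [hsm, hsm]
      simp only [inner_sub_left, inner_sub_right, inner_smul_left, inner_smul_right,
        Complex.conj_ofReal, hee k, mul_one, ← inner_conj_symm (x j) (e k)]
      simp only [Complex.add_re, Complex.sub_re, Complex.mul_re, Complex.ofReal_re,
        Complex.ofReal_im, Complex.conj_re, Complex.conj_im, Complex.mul_im, hxx j]
      ring
    rw [hex] at h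
    have hamgm : 2 * Real.sqrt (mm k * MM k) * ‖x j‖ ≤ ‖x j‖ ^ 2 + mm k * MM k := by
      have hs2 : Real.sqrt (mm k * MM k) ^ 2 = mm k * MM k :=
        Real.sq_sqrt (mul_pos (hm k) ((hm k).trans_le (hM k))).le
      nlinarith [sq_nonneg (‖x j‖ - Real.sqrt (mm k * MM k))]
    rw [← hr']
    have heq2 : 2 * (Real.sqrt (mm k * MM k) / (MM k + mm k)) * ‖x j‖
        = (2 * Real.sqrt (mm k * MM k) * ‖x j‖) / (MM k + mm k) := by ring
    rw [heq2, div_le_iff₀ (hMk k)]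
    nlinarith
  have key2 : ∀ j k, 2 * s k * ‖x j‖ ≤ (⟪e k, x j⟫_ℂ).im := by
    intro j k
    have h := h2 j k
    have hex : (⟪NN k • (Complex.I • e k) - x j, x j - nn k • (Complex.I • e k)⟫_ℂ).re
        = (NN k + nn k) * (⟪e k, x j⟫_ℂ).im - nn k * NN k - ‖x j‖ ^ 2 := by
      rw [hsm, hsm]
      simp only [smul_smul, inner_sub_left, inner_sub_right, inner_smul_left, inner_smul_right,
        map_mul, Complex.conj_ofReal, Complex.conj_I, hee k, mul_one,
        ← inner_conj_symm (x j) (e k)]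
      simp only [Complex.add_re, Complex.sub_re, Complex.mul_re, Complex.ofReal_re,
        Complex.ofReal_im, Complex.conj_re, Complex.conj_im, Complex.mul_im,
        Complex.I_re, Complex.I_im, Complex.neg_re, Complex.neg_im,
        Complex.sub_im, Complex.add_im, hxx j]
      ring
    rw [hex] at h
    have hamgm : 2 * Real.sqrt (nn k * NN k) * ‖x j‖ ≤ ‖x j‖ ^ 2 + nn k * NN k := by
      have hs2 : Real.sqrt (nn k * NN k) ^ 2 = nn k * NN k :=
        Real.sq_sqrt (mul_pos (hn k) ((hn k).trans_le (hN k))).le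
      nlinarith [sq_nonneg (‖x j‖ - Real.sqrt (nn k * NN k))]
    rw [← hs']
    have heq2 : 2 * (Real.sqrt (nn k * NN k) / (NN k + nn k)) * ‖x j‖
        = (2 * Real.sqrt (nn k * NN k) * ‖x j‖) / (NN k + nn k) := by ring
    rw [heq2, div_le_iff₀ (hNk k)]
    nlinarith
  -- lower bound for re ⟪u, z⟫
  have hreuz : (⟪u, z⟫_ℂ).re
      = ∑ k, ∑ j, (r k * (⟪e k, x j⟫_ℂ).re + s k * (⟪e k, x j⟫_ℂ).im) := by
    rw [hudef, hzdef, sum_inner, Complex.re_sum]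
    refine Finset.sum_congr rfl fun k _ => ?_
    rw [inner_smul_left, inner_sum, Finset.mul_sum, Complex.re_sum]
    refine Finset.sum_congr rfl fun j _ => ?_
    simp [hcdef, Complex.mul_re, Complex.mul_im]
  have hlow : 2 * T * S ≤ (⟪u, z⟫_ℂ).re := by
    rw [hreuz]
    have h2T : 2 * T = ∑ k, 2 * (r k ^ 2 + s k ^ 2) := by
      rw [hTdef, Finset.mul_sum]
    have hsplit : 2 * T * S = ∑ k, ∑ j, (r k * (2 * r k * ‖x j‖) + s k * (2 * s k * ‖x j‖)) := by
      rw [h2T, hSdef, Finset.sum_mul_sum]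
      refine Finset.sum_congr rfl fun k _ => Finset.sum_congr rfl fun j _ => ?_
      ring
    rw [hsplit]
    refine Finset.sum_le_sum fun k _ => Finset.sum_le_sum fun j _ => ?_
    have k1 := key1 j k; have k2 := key2 j k
    have hrk := (hrpos k).le; have hsk := (hspos k).le
    nlinarith
  have hub : (⟪u, z⟫_ℂ).re ≤ ‖u‖ * ‖z‖ := by
    calc (⟪u, z⟫_ℂ).re ≤ ‖⟪u, z⟫_ℂ‖ := Complex.re_le_norm _
      _ ≤ ‖u‖ * ‖z‖ := by exact norm_inner_le_norm u z
  constructor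
  · intro heq
    have hzn : ‖z‖ = 2 * Real.sqrt T * S := heq.symm
    have hprod : ‖u‖ * ‖z‖ = 2 * T * S := by
      rw [huN, hzn]
      have hss : Real.sqrt T * Real.sqrt T = T := Real.mul_self_sqrt hTpos.le
      linear_combination 2 * S * hss
    have hre : (⟪u, z⟫_ℂ).re = ‖u‖ * ‖z‖ := le_antisymm hub (by rw [hprod]; exact hlow)
    have habs : ‖⟪u, z⟫_ℂ‖ = (⟪u, z⟫_ℂ).re := by
      refine le_antisymm ?_ (Complex.re_le_norm _)
      rw [hre]; exact norm_inner_le_norm u z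
    have him : (⟪u, z⟫_ℂ).im = 0 := by
      have ha := Complex.sq_norm ⟪u, z⟫_ℂ
      rw [habs, Complex.normSq_apply] at ha
      have hsq : (⟪u, z⟫_ℂ).re ^ 2 = (⟪u, z⟫_ℂ).re * (⟪u, z⟫_ℂ).re := pow_two _
      have h0 : (⟪u, z⟫_ℂ).im * (⟪u, z⟫_ℂ).im = 0 := by linarith
      exact mul_self_eq_zero.mp h0
    have hinner : ⟪u, z⟫_ℂ = ((‖u‖ : ℂ) * (‖z‖ : ℂ)) := by
      apply Complex.ext
      · simpa using hre
      · simpa using him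
    have hcol : (‖z‖ : ℂ) • u = (‖u‖ : ℂ) • z := inner_eq_norm_mul_iff.1 hinner
    have hTne : (Real.sqrt T : ℂ) ≠ 0 := by
      simpa using (Real.sqrt_ne_zero'.2 hTpos)
    have hz2 : z = ((2 * S : ℝ) : ℂ) • u := by
      rw [huN, hzn] at hcol
      have hcol2 := congrArg (fun v => ((Real.sqrt T : ℂ))⁻¹ • v) hcol
      simp only [smul_smul] at hcol2
      rw [inv_mul_cancel₀ hTne, one_smul] at hcol2
      rw [← hcol2]
      congr 1
      push_cast
      field_simp
    rw [hz2, hsm S u, smul_smul]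
    congr 1
    push_cast
    ring_nf
  · intro heq
    have hznorm : ‖z‖ = 2 * S * ‖u‖ := by
      rw [heq, hsm S u, smul_smul, norm_smul]
      simp [map_mul, abs_of_nonneg hSnn]
    rw [hznorm, huN]
    ring
end

section
/- Let z₁, …, zₙ be nonzero complex numbers and let φ₁, φ₂ be real numbers with 0 < φ₁ ≤ φ₂ < π/2 such that φ₁ ≤ arg(zₖ) ≤ φ₂ for each k ∈ {1, …, n}. Then √(sin²φ₁ + cos²φ₂) · Σₖ₌₁ⁿ |zₖ| ≤ |Σₖ₌₁ⁿ zₖ|, with equality if and only if Σₖ₌₁ⁿ zₖ = (cos φ₂ + i sin φ₁) · Σₖ₌₁ⁿ |zₖ|. -/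
theorem stmt_17 (n : ℕ) (z : Fin n → ℂ) (hz : ∀ k, z k ≠ 0)
    (φ₁ φ₂ : ℝ) (hφ₁ : 0 < φ₁) (hφ₁₂ : φ₁ ≤ φ₂) (hφ₂ : φ₂ < Real.pi / 2)
    (harg : ∀ k, φ₁ ≤ (z k).arg ∧ (z k).arg ≤ φ₂) :
    Real.sqrt (Real.sin φ₁ ^ 2 + Real.cos φ₂ ^ 2) * ∑ k, ‖z k‖ ≤
        ‖∑ k, z k‖ ∧
      (Real.sqrt (Real.sin φ₁ ^ 2 + Real.cos φ₂ ^ 2) * ∑ k, ‖z k‖ =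
          ‖∑ k, z k‖ ↔
        ∑ k, z k = ((Real.cos φ₂ : ℂ) + Complex.I * (Real.sin φ₁ : ℂ)) *
          (∑ k, ‖z k‖ : ℝ)) := by
  have hpi := Real.pi_pos
  set R := ∑ k, ‖z k‖ with hRdef
  set S := ∑ k, z k with hSdef
  have hcos : 0 ≤ Real.cos φ₂ :=
    Real.cos_nonneg_of_mem_Icc ⟨by linarith, hφ₂.le⟩
  have hsin : 0 ≤ Real.sin φ₁ :=
    Real.sin_nonneg_of_nonneg_of_le_pi hφ₁.le (by linarith)
  have hR : 0 ≤ R := Finset.sum_nonneg fun k _ => (norm_nonneg _)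
  have hre_k : ∀ k, Real.cos φ₂ * ‖z k‖ ≤ (z k).re := by
    intro k
    have habs : 0 < ‖z k‖ := norm_pos_iff.mpr (hz k)
    have h := Complex.cos_arg (hz k)
    have hle : Real.cos φ₂ ≤ Real.cos (z k).arg :=
      Real.cos_le_cos_of_nonneg_of_le_pi (le_of_lt (lt_of_lt_of_le hφ₁ (harg k).1))
        (by linarith) (harg k).2
    have : (z k).re = Real.cos (z k).arg * ‖z k‖ := by
      field_simp at h; linarith [h]
    rw [this]
    exact mul_le_mul_of_nonneg_right hle habs.le
  have him_k : ∀ k, Real.sin φ₁ * ‖z k‖ ≤ (z k).im := by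
    intro k
    have habs : 0 < ‖z k‖ := norm_pos_iff.mpr (hz k)
    have h := Complex.sin_arg (z k)
    have hle : Real.sin φ₁ ≤ Real.sin (z k).arg :=
      Real.sin_le_sin_of_le_of_le_pi_div_two (by linarith) (by linarith [(harg k).2])
        (harg k).1
    have : (z k).im = Real.sin (z k).arg * ‖z k‖ := by
      field_simp at h; linarith [h]
    rw [this]
    exact mul_le_mul_of_nonneg_right hle habs.le
  have hre : Real.cos φ₂ * R ≤ S.re := by
    rw [hSdef, Complex.re_sum, hRdef, Finset.mul_sum]
    exact Finset.sum_le_sum fun k _ => hre_k k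
  have him : Real.sin φ₁ * R ≤ S.im := by
    rw [hSdef, Complex.im_sum, hRdef, Finset.mul_sum]
    exact Finset.sum_le_sum fun k _ => him_k k
  have hre0 : 0 ≤ S.re := le_trans (by positivity) hre
  have him0 : 0 ≤ S.im := le_trans (by positivity) him
  have habsS : ‖S‖ = Real.sqrt (S.re ^ 2 + S.im ^ 2) := by
    rw [Complex.norm_def, Complex.normSq_apply]; ring_nf
  have hlhs : Real.sqrt (Real.sin φ₁ ^ 2 + Real.cos φ₂ ^ 2) * R =
      Real.sqrt ((Real.sin φ₁ * R) ^ 2 + (Real.cos φ₂ * R) ^ 2) := by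
    rw [mul_pow, mul_pow, ← add_mul, Real.sqrt_mul (by positivity), Real.sqrt_sq hR]
  have h1 : (Real.cos φ₂ * R) ^ 2 ≤ S.re ^ 2 := pow_le_pow_left₀ (mul_nonneg hcos hR) hre 2
  have h2 : (Real.sin φ₁ * R) ^ 2 ≤ S.im ^ 2 := pow_le_pow_left₀ (mul_nonneg hsin hR) him 2
  clear_value S R
  constructor
  · rw [hlhs, habsS]
    exact Real.sqrt_le_sqrt (by linarith)
  · constructor
    · intro heq
      rw [hlhs, habsS] at heq
      have hsq : (Real.sin φ₁ * R) ^ 2 + (Real.cos φ₂ * R) ^ 2 = S.re ^ 2 + S.im ^ 2 := by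
        have hA := Real.sq_sqrt (show (0:ℝ) ≤ (Real.sin φ₁ * R) ^ 2 + (Real.cos φ₂ * R) ^ 2 by positivity)
        have hB := Real.sq_sqrt (show (0:ℝ) ≤ S.re ^ 2 + S.im ^ 2 by positivity)
        rw [← hA, heq, hB]
      have hsq1 : S.re ^ 2 = (Real.cos φ₂ * R) ^ 2 := le_antisymm (by linarith) h1
      have hsq2 : S.im ^ 2 = (Real.sin φ₁ * R) ^ 2 := le_antisymm (by linarith) h2
      have e1 : S.re = Real.cos φ₂ * R := by
        rw [← Real.sqrt_sq hre0, hsq1, Real.sqrt_sq (mul_nonneg hcos hR)]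
      have e2 : S.im = Real.sin φ₁ * R := by
        rw [← Real.sqrt_sq him0, hsq2, Real.sqrt_sq (mul_nonneg hsin hR)]
      rw [Complex.ext_iff]
      constructor <;>
        simp [e1, e2, Complex.mul_re, Complex.mul_im, -Complex.ofReal_cos,
          -Complex.ofReal_sin]
    · intro heq
      have e1 : S.re = Real.cos φ₂ * R := by
        rw [heq]; simp [Complex.mul_re, -Complex.ofReal_cos, -Complex.ofReal_sin]
      have e2 : S.im = Real.sin φ₁ * R := by
        rw [heq]; simp [Complex.mul_im, -Complex.ofReal_cos, -Complex.ofReal_sin, mul_comm]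
      rw [hlhs, habsS, e1, e2, add_comm]
end

section
/- Let e ∈ ℂ with |e| = 1 and let ρ₁, ρ₂ ∈ (0, 1). If the complex numbers z₁, …, zₙ satisfy |zₖ − e| ≤ ρ₁ and |zₖ − ie| ≤ ρ₂ for each k ∈ {1, …, n}, then √(2 − ρ₁² − ρ₂²) · Σₖ₌₁ⁿ |zₖ| ≤ |Σₖ₌₁ⁿ zₖ|, with equality if and only if Σₖ₌₁ⁿ zₖ = (√(1 − ρ₁²) + i√(1 − ρ₂²))(Σₖ₌₁ⁿ |zₖ|) e. -/
lemma aux_re (u z : ℂ) (ρ : ℝ) (hρ : ρ < 1) (hu : ‖u‖ = 1)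
    (h : ‖z - u‖ ≤ ρ) :
    Real.sqrt (1 - ρ^2) * ‖z‖ ≤ (z * (starRingEnd ℂ) u).re := by
  have hρ0 : 0 ≤ ρ := le_trans (norm_nonneg _) h
  have h2 : ‖z - u‖ ^ 2 ≤ ρ ^ 2 := by
    nlinarith [norm_nonneg (z - u)]
  have hns : Complex.normSq (z - u) =
      Complex.normSq z - 2 * (z * (starRingEnd ℂ) u).re + Complex.normSq u := by
    simp [Complex.normSq_apply, Complex.mul_re, Complex.sub_re, Complex.sub_im,
      Complex.conj_re, Complex.conj_im]
    ring
  have h3 : ‖z‖ ^ 2 + 1 - ρ^2 ≤ 2 * (z * (starRingEnd ℂ) u).re := by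
    have e1 : ‖z - u‖ ^ 2 = Complex.normSq (z - u) := Complex.sq_norm _
    have e2 : ‖z‖ ^ 2 = Complex.normSq z := Complex.sq_norm _
    have e3 : Complex.normSq u = 1 := by
      have := Complex.sq_norm u; rw [hu] at this; linarith
    nlinarith
  have hsq : Real.sqrt (1 - ρ^2) ^ 2 = 1 - ρ^2 := Real.sq_sqrt (by nlinarith)
  nlinarith [sq_nonneg (‖z‖ - Real.sqrt (1 - ρ^2)), Real.sqrt_nonneg (1 - ρ^2),
    norm_nonneg z]

lemma aux_im (z e : ℂ) : (z * (starRingEnd ℂ) (Complex.I * e)).re = (z * (starRingEnd ℂ) e).im := by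
  simp [Complex.mul_re, Complex.mul_im, Complex.conj_re, Complex.conj_im]
  ring

lemma real_key (a b T R I X : ℝ) (ha0 : 0 ≤ a) (hb0 : 0 ≤ b) (hT0 : 0 ≤ T)
    (hRe : a * T ≤ R) (hIm : b * T ≤ I) (hX0 : 0 ≤ X) (hX : X ^ 2 = R ^ 2 + I ^ 2) :
    Real.sqrt (a ^ 2 + b ^ 2) * T ≤ X ∧
      (Real.sqrt (a ^ 2 + b ^ 2) * T = X → R = a * T ∧ I = b * T) := by
  have hs2 : Real.sqrt (a ^ 2 + b ^ 2) ^ 2 = a ^ 2 + b ^ 2 := Real.sq_sqrt (by positivity)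
  have hs0 : 0 ≤ Real.sqrt (a ^ 2 + b ^ 2) := Real.sqrt_nonneg _
  have haT0 : 0 ≤ a * T := mul_nonneg ha0 hT0
  have hbT0 : 0 ≤ b * T := mul_nonneg hb0 hT0
  have hx : 0 ≤ R - a * T := by linarith
  have hy : 0 ≤ I - b * T := by linarith
  have hRsq : a ^ 2 * T ^ 2 ≤ R ^ 2 := by nlinarith [mul_nonneg hx (by linarith : 0 ≤ R + a * T)]
  have hIsq : b ^ 2 * T ^ 2 ≤ I ^ 2 := by nlinarith [mul_nonneg hy (by linarith : 0 ≤ I + b * T)]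
  have hmain : Real.sqrt (a ^ 2 + b ^ 2) * T ≤ X := by
    nlinarith [mul_nonneg hs0 hT0, sq_nonneg (Real.sqrt (a ^ 2 + b ^ 2) * T - X),
      sq_nonneg (Real.sqrt (a ^ 2 + b ^ 2) * T + X)]
  refine ⟨hmain, fun h => ?_⟩
  have hsqeq : R ^ 2 + I ^ 2 = a ^ 2 * T ^ 2 + b ^ 2 * T ^ 2 := by
    rw [← hX, ← h]; rw [mul_pow, hs2]; ring
  have hR2 : R ^ 2 = a ^ 2 * T ^ 2 := by linarith
  have hI2 : I ^ 2 = b ^ 2 * T ^ 2 := by linarith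
  constructor
  · nlinarith [mul_nonneg hx (by linarith : 0 ≤ R + a * T)]
  · nlinarith [mul_nonneg hy (by linarith : 0 ≤ I + b * T)]

theorem stmt_18 (e : ℂ) (he : ‖e‖ = 1) (ρ₁ ρ₂ : ℝ)
    (hρ₁ : ρ₁ ∈ Set.Ioo (0 : ℝ) 1) (hρ₂ : ρ₂ ∈ Set.Ioo (0 : ℝ) 1)
    (n : ℕ) (z : Fin n → ℂ)
    (h1 : ∀ k, ‖z k - e‖ ≤ ρ₁)
    (h2 : ∀ k, ‖z k - Complex.I * e‖ ≤ ρ₂) :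
    Real.sqrt (2 - ρ₁ ^ 2 - ρ₂ ^ 2) * ∑ k, ‖z k‖ ≤
        ‖∑ k, z k‖ ∧
      (Real.sqrt (2 - ρ₁ ^ 2 - ρ₂ ^ 2) * ∑ k, ‖z k‖ =
          ‖∑ k, z k‖ ↔
        ∑ k, z k = ((Real.sqrt (1 - ρ₁ ^ 2) : ℂ) + Complex.I * (Real.sqrt (1 - ρ₂ ^ 2) : ℂ)) *
          (∑ k, ‖z k‖ : ℝ) * e) := by
  set a := Real.sqrt (1 - ρ₁ ^ 2) with ha_def
  set b := Real.sqrt (1 - ρ₂ ^ 2) with hb_def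
  set T := ∑ k, ‖z k‖ with hT_def
  set S := ∑ k, z k with hS_def
  have ha0 : 0 ≤ a := Real.sqrt_nonneg _
  have hb0 : 0 ≤ b := Real.sqrt_nonneg _
  have ha2 : a ^ 2 = 1 - ρ₁ ^ 2 := Real.sq_sqrt (by nlinarith [hρ₁.1, hρ₁.2])
  have hb2 : b ^ 2 = 1 - ρ₂ ^ 2 := Real.sq_sqrt (by nlinarith [hρ₂.1, hρ₂.2])
  have hcab : Real.sqrt (2 - ρ₁ ^ 2 - ρ₂ ^ 2) = Real.sqrt (a ^ 2 + b ^ 2) := by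
    rw [ha2, hb2]; congr 1; ring
  have hT0 : 0 ≤ T := Finset.sum_nonneg fun k _ => norm_nonneg _
  have hre_sum : (S * (starRingEnd ℂ) e).re = ∑ k, (z k * (starRingEnd ℂ) e).re := by
    rw [hS_def, Finset.sum_mul, Complex.re_sum]
  have him_sum : (S * (starRingEnd ℂ) e).im = ∑ k, (z k * (starRingEnd ℂ) e).im := by
    rw [hS_def, Finset.sum_mul, Complex.im_sum]
  have hRe : a * T ≤ (S * (starRingEnd ℂ) e).re := by
    rw [hre_sum, hT_def, Finset.mul_sum]
    exact Finset.sum_le_sum fun k _ => aux_re e (z k) ρ₁ hρ₁.2 he (h1 k)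
  have habsIe : ‖Complex.I * e‖ = 1 := by
    rw [norm_mul, Complex.norm_I, one_mul, he]
  have hIm : b * T ≤ (S * (starRingEnd ℂ) e).im := by
    rw [him_sum, hT_def, Finset.mul_sum]
    refine Finset.sum_le_sum fun k _ => ?_
    rw [← aux_im]
    exact aux_re (Complex.I * e) (z k) ρ₂ hρ₂.2 habsIe (h2 k)
  have habsS : ‖S‖ = ‖S * (starRingEnd ℂ) e‖ := by
    rw [norm_mul, Complex.norm_conj, he, mul_one]
  have hsq_abs : ‖S * (starRingEnd ℂ) e‖ ^ 2 =
      (S * (starRingEnd ℂ) e).re ^ 2 + (S * (starRingEnd ℂ) e).im ^ 2 := by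
    rw [Complex.sq_norm, Complex.normSq_apply]; ring
  obtain ⟨hmain, hforce⟩ := real_key a b T (S * (starRingEnd ℂ) e).re
    (S * (starRingEnd ℂ) e).im (‖S * (starRingEnd ℂ) e‖)
    ha0 hb0 hT0 hRe hIm (norm_nonneg _) hsq_abs
  rw [hcab, habsS]
  refine ⟨hmain, fun h => ?_, fun h => ?_⟩
  · -- forward
    obtain ⟨hRe', hIm'⟩ := hforce h
    have hSe : S * (starRingEnd ℂ) e = ((a : ℂ) + Complex.I * (b : ℂ)) * (T : ℝ) := by
      apply Complex.ext
      · rw [hRe']; simp [Complex.mul_re, Complex.mul_im]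
      · rw [hIm']; simp [Complex.mul_re, Complex.mul_im]
    have hee : (starRingEnd ℂ) e * e = 1 := by
      rw [mul_comm, Complex.mul_conj]
      norm_cast
      rw [Complex.normSq_eq_norm_sq, he, one_pow]
    calc S = S * ((starRingEnd ℂ) e * e) := by rw [hee, mul_one]
      _ = (S * (starRingEnd ℂ) e) * e := by ring
      _ = ((a : ℂ) + Complex.I * (b : ℂ)) * (T : ℝ) * e := by rw [hSe]
  · -- backward
    have habs_ab : ‖(a : ℂ) + Complex.I * (b : ℂ)‖ = Real.sqrt (a ^ 2 + b ^ 2) := by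
      rw [Complex.norm_def, Complex.normSq_apply]
      simp
      ring_nf
    rw [h]
    simp only [norm_mul, habs_ab, he, Complex.norm_conj, Complex.norm_real, Real.norm_eq_abs]
    rw [abs_of_nonneg hT0]
    ring
end

section
/- Let a ∈ ℝ and θ ∈ (0, π/2), and let z₁, …, zₙ be nonzero complex numbers such that a − θ ≤ arg(zₖ) ≤ a + θ for each k ∈ {1, …, n}, where a − θ and a + θ lie in (−π, π]. Then cos θ · Σₖ₌₁ⁿ |zₖ| ≤ |Σₖ₌₁ⁿ zₖ|. -/
theorem stmt_19 (a θ : ℝ) (hθ : θ ∈ Set.Ioo 0 (Real.pi / 2))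
    (ha₁ : -Real.pi < a - θ) (ha₂ : a + θ ≤ Real.pi)
    (n : ℕ) (z : Fin n → ℂ) (hz : ∀ k, z k ≠ 0)
    (harg : ∀ k, a - θ ≤ (z k).arg ∧ (z k).arg ≤ a + θ) :
    Real.cos θ * ∑ k, ‖z k‖ ≤ ‖∑ k, z k‖ := by
  obtain ⟨hθ0, hθπ⟩ := hθ
  have key : ∀ k, Real.cos θ * ‖z k‖ ≤
      (z k * Complex.exp (-(a : ℂ) * Complex.I)).re := by
    intro k
    have h1 : z k * Complex.exp (-(a : ℂ) * Complex.I)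
        = ((‖z k‖ : ℝ) : ℂ) * Complex.exp ((((z k).arg - a : ℝ) : ℂ) * Complex.I) := by
      conv_lhs => rw [← Complex.norm_mul_exp_arg_mul_I (z k)]
      rw [mul_assoc, ← Complex.exp_add]
      push_cast
      ring_nf
    rw [h1]
    have h2 : (((‖z k‖ : ℝ) : ℂ) *
        Complex.exp ((((z k).arg - a : ℝ) : ℂ) * Complex.I)).re
        = ‖z k‖ * Real.cos ((z k).arg - a) := by
      rw [Complex.exp_mul_I]
      simp [← Complex.ofReal_sub, Complex.cos_ofReal_re, Complex.sin_ofReal_im]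
    rw [h2]
    have hd : |(z k).arg - a| ≤ θ := by
      rw [abs_le]
      constructor <;> [linarith [(harg k).1]; linarith [(harg k).2]]
    have hc : Real.cos θ ≤ Real.cos ((z k).arg - a) := by
      rw [← Real.cos_abs ((z k).arg - a)]
      exact Real.cos_le_cos_of_nonneg_of_le_pi (abs_nonneg _) (by linarith [Real.pi_pos]) hd
    have := norm_nonneg (z k)
    nlinarith
  calc Real.cos θ * ∑ k, ‖z k‖
      = ∑ k, Real.cos θ * ‖z k‖ := by rw [Finset.mul_sum]
    _ ≤ ∑ k, (z k * Complex.exp (-(a : ℂ) * Complex.I)).re :=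
        Finset.sum_le_sum fun k _ => key k
    _ = ((∑ k, z k) * Complex.exp (-(a : ℂ) * Complex.I)).re := by
        rw [Finset.sum_mul, Complex.re_sum]
    _ ≤ ‖(∑ k, z k) * Complex.exp (-(a : ℂ) * Complex.I)‖ :=
        Complex.re_le_norm _
    _ = ‖∑ k, z k‖ := by
        rw [norm_mul]
        have : ‖Complex.exp (-(a : ℂ) * Complex.I)‖ = 1 := by
          rw [show -(a : ℂ) * Complex.I = ((-a : ℝ) : ℂ) * Complex.I by push_cast; ring,
            Complex.norm_exp_ofReal_mul_I]
        rw [this, mul_one]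
end
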